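/- Assume Assumption (Well-and-walls), fix C > 0 and set C_n := ⌈C·log n⌉. For n ≥ 2 let G_n be the event that there exist an integer −n ≤ x ≤ n and an integer k ≥ 0 with ρ_x^{(k)} > d_n·e^{−q_n} and an integer y with x − 2C_n ≤ y ≤ x + 2C_n, y ∉ {x−1, x+k}, such that c_y ∉ [e^{−4q_n}, e^{4q_n}]. Then ℙ-almost surely, G_n occurs for only finitely many n. -/

import Mathlib

open MeasureTheory ProbabilityTheory Filter Real
open scoped ENNReal NNReal

variable {Ω : Type*}

/-- A measurable function `L : (0,∞) → (0,∞)` is slowly varying if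
`L(a t)/L(t) → 1` as `t → ∞` for every `a > 0`. -/
def SlowlyVarying (L : ℝ → ℝ) : Prop :=
  Measurable L ∧ (∀ t : ℝ, 0 < t → 0 < L t) ∧
    ∀ a : ℝ, 0 < a → Tendsto (fun t => L (a * t) / L t) atTop (nhds 1)

/-- `ρ_x = e^{-λ} c_{x-1} / c_x`. -/
noncomputable def rho (lam : ℝ) (c : ℤ → Ω → ℝ) (x : ℤ) (ω : Ω) : ℝ :=
  Real.exp (-lam) * c (x - 1) ω / c x ω

/-- `ρ_x^{(k)} = e^{-λ(k+1)} c_{x-1} / c_{x+k}`. -/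
noncomputable def rhoK (lam : ℝ) (c : ℤ → Ω → ℝ) (x : ℤ) (k : ℕ) (ω : Ω) : ℝ :=
  Real.exp (-lam * ((k : ℝ) + 1)) * c (x - 1) ω / c (x + (k : ℤ)) ω

/-- `q_n = (log n)^{1/4}`. -/
noncomputable def qseq (n : ℕ) : ℝ := Real.log n ^ ((1 : ℝ) / 4)

lemma exists_pow_two_bound (s : ℝ) (hs : 1 ≤ s) :
    ∃ m : ℕ, (2:ℝ) ^ m ≤ s ∧ s < 2 ^ (m+1) := by
  have h1 : 1 ≤ ⌊s⌋₊ := Nat.one_le_floor_iff s |>.mpr hs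
  refine ⟨Nat.log 2 ⌊s⌋₊, ?_, ?_⟩
  · calc ((2:ℝ) ^ Nat.log 2 ⌊s⌋₊) = ((2 ^ Nat.log 2 ⌊s⌋₊ : ℕ) : ℝ) := by push_cast; ring
      _ ≤ (⌊s⌋₊ : ℝ) := by exact_mod_cast Nat.pow_log_le_self 2 (by omega)
      _ ≤ s := Nat.floor_le (by linarith)
  · have h2 : ⌊s⌋₊ < 2 ^ (Nat.log 2 ⌊s⌋₊ + 1) := Nat.lt_pow_succ_log_self (by norm_num) _
    have h3 : s < (⌊s⌋₊ : ℝ) + 1 := Nat.lt_floor_add_one s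
    have h4 : ((⌊s⌋₊ : ℕ) : ℝ) + 1 ≤ ((2 ^ (Nat.log 2 ⌊s⌋₊ + 1) : ℕ) : ℝ) := by
      exact_mod_cast Nat.succ_le_of_lt h2
    calc s < (⌊s⌋₊ : ℝ) + 1 := h3
      _ ≤ ((2 ^ (Nat.log 2 ⌊s⌋₊ + 1) : ℕ) : ℝ) := h4
      _ = 2 ^ (Nat.log 2 ⌊s⌋₊ + 1) := by push_cast; ring

/-- A tail-type function: antitone, `≤ 1`, positive, equal to `M t * t^(-a)` with `M`
slowly varying for `t > 1`. -/
structure TailFun (k : ℝ → ℝ≥0∞) (M : ℝ → ℝ) (a : ℝ) : Prop where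
  anti : ∀ ⦃s t : ℝ⦄, 0 < s → s ≤ t → k t ≤ k s
  formula : ∀ t : ℝ, 1 < t → k t = ENNReal.ofReal (M t * t ^ (-a))
  sv : SlowlyVarying M
  apos : 0 < a
  le_one : ∀ t, k t ≤ 1

namespace TailFun

variable {k : ℝ → ℝ≥0∞} {M : ℝ → ℝ} {a : ℝ}

lemma kpos (hk : TailFun k M a) {t : ℝ} (ht : 0 < t) : 0 < k t := by
  have h2 : (0:ℝ≥0∞) < k 2 := by
    rw [hk.formula 2 (by norm_num)]
    have := hk.sv.2.1 2 (by norm_num)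
    have h2a : (0:ℝ) < (2:ℝ) ^ (-a) := Real.rpow_pos_of_pos (by norm_num) _
    exact ENNReal.ofReal_pos.mpr (by positivity)
  rcases le_or_gt t 2 with h | h
  · exact lt_of_lt_of_le h2 (hk.anti ht h)
  · rw [hk.formula t (by linarith)]
    have := hk.sv.2.1 t (by linarith)
    have h2a : (0:ℝ) < t ^ (-a) := Real.rpow_pos_of_pos (by linarith) _
    exact ENNReal.ofReal_pos.mpr (by positivity)

lemma doubling (hk : TailFun k M a) {ε : ℝ} (hε : 0 < ε) :
    ∃ T : ℝ, 2 < T ∧ ∀ t : ℝ, T ≤ t →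
      (2:ℝ) ^ (-ε) * M t ≤ M (2 * t) ∧ M (2 * t) ≤ (2:ℝ) ^ ε * M t := by
  have hlo : (2:ℝ) ^ (-ε) < 1 := by
    apply Real.rpow_lt_one_of_one_lt_of_neg (by norm_num) (by linarith)
  have hhi : (1:ℝ) < 2 ^ ε := Real.one_lt_rpow_iff_of_pos (by norm_num) |>.mpr
    (Or.inl ⟨by norm_num, hε⟩)
  have htend := hk.sv.2.2 2 (by norm_num)
  have hev : ∀ᶠ t in atTop, M (2 * t) / M t ∈ Set.Ioo ((2:ℝ)^(-ε)) ((2:ℝ)^ε) :=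
    htend.eventually (Ioo_mem_nhds hlo hhi)
  rw [eventually_atTop] at hev
  obtain ⟨T₀, hT₀⟩ := hev
  refine ⟨max T₀ 3, by simp [lt_max_iff]; right; norm_num, ?_⟩
  intro t ht
  have ht3 : (3:ℝ) ≤ t := le_trans (le_max_right _ _) ht
  have htpos : (0:ℝ) < t := by linarith
  have hMt : 0 < M t := hk.sv.2.1 t htpos
  have h := hT₀ t (le_trans (le_max_left _ _) ht)
  constructor
  · have := h.1
    rw [lt_div_iff₀ hMt] at this
    linarith
  · have := h.2
    rw [div_lt_iff₀ hMt] at this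
    linarith

lemma step_up (hk : TailFun k M a) {ε : ℝ} {T t : ℝ} (hT : 2 < T)
    (hD : ∀ t : ℝ, T ≤ t → (2:ℝ) ^ (-ε) * M t ≤ M (2 * t) ∧ M (2 * t) ≤ (2:ℝ) ^ ε * M t)
    (ht : T ≤ t) : k (t * 2) ≤ ENNReal.ofReal ((2:ℝ) ^ (ε - a)) * k t := by
  have htpos : (0:ℝ) < t := by linarith
  have h1 : (1:ℝ) < t := by linarith
  have h2 : (1:ℝ) < t * 2 := by linarith
  rw [hk.formula t h1, hk.formula _ h2, ← ENNReal.ofReal_mul (by positivity)]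
  apply ENNReal.ofReal_le_ofReal
  have hrp : (t * 2) ^ (-a) = 2 ^ (-a) * t ^ (-a) := by
    rw [mul_comm t 2, Real.mul_rpow (by norm_num) (le_of_lt htpos)]
  rw [hrp]
  have hMle : M (t * 2) ≤ (2:ℝ) ^ ε * M t := by
    rw [mul_comm t 2]; exact (hD t ht).2
  have hpos2 : (0:ℝ) < (2:ℝ) ^ (-a) * t ^ (-a) := by positivity
  calc M (t*2) * ((2:ℝ)^(-a) * t^(-a)) ≤ ((2:ℝ)^ε * M t) * ((2:ℝ)^(-a) * t^(-a)) := by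
        apply mul_le_mul_of_nonneg_right hMle (le_of_lt hpos2)
    _ = (2:ℝ)^(ε-a) * (M t * t ^ (-a)) := by
        rw [show ε - a = ε + (-a) by ring, Real.rpow_add (by norm_num : (0:ℝ) < 2)]
        ring

lemma step_down (hk : TailFun k M a) {ε : ℝ} {T t : ℝ} (hT : 2 < T)
    (hD : ∀ t : ℝ, T ≤ t → (2:ℝ) ^ (-ε) * M t ≤ M (2 * t) ∧ M (2 * t) ≤ (2:ℝ) ^ ε * M t)
    (ht : T ≤ t) : k t ≤ ENNReal.ofReal ((2:ℝ) ^ (a + ε)) * k (t * 2) := by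
  have htpos : (0:ℝ) < t := by linarith
  have h1 : (1:ℝ) < t := by linarith
  have h2 : (1:ℝ) < t * 2 := by linarith
  rw [hk.formula t h1, hk.formula _ h2, ← ENNReal.ofReal_mul (by positivity)]
  apply ENNReal.ofReal_le_ofReal
  have hrp : (t * 2) ^ (-a) = 2 ^ (-a) * t ^ (-a) := by
    rw [mul_comm t 2, Real.mul_rpow (by norm_num) (le_of_lt htpos)]
  rw [hrp]
  have hMge : (2:ℝ) ^ (-ε) * M t ≤ M (t * 2) := by
    rw [mul_comm t 2]; exact (hD t ht).1
  have htr : (0:ℝ) < t ^ (-a) := by positivity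
  calc M t * t ^ (-a)
      = (2:ℝ)^(a+ε) * (((2:ℝ)^(-ε) * M t) * ((2:ℝ)^(-a) * t^(-a))) := by
        rw [show (2:ℝ)^(a+ε) = (2:ℝ)^a * (2:ℝ)^ε from Real.rpow_add (by norm_num) a ε,
            show (2:ℝ)^(-ε) = ((2:ℝ)^ε)⁻¹ from Real.rpow_neg (by norm_num) ε,
            show (2:ℝ)^(-a) = ((2:ℝ)^a)⁻¹ from Real.rpow_neg (by norm_num) a]
        have e1 : ((2:ℝ)^ε) ≠ 0 := by positivity
        have e2 : ((2:ℝ)^a) ≠ 0 := by positivity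
        field_simp
    _ ≤ (2:ℝ)^(a+ε) * (M (t*2) * ((2:ℝ)^(-a) * t^(-a))) := by
        apply mul_le_mul_of_nonneg_left _ (by positivity)
        apply mul_le_mul_of_nonneg_right hMge (by positivity)

lemma chain_up (hk : TailFun k M a) {ε : ℝ} {T : ℝ} (hT : 2 < T)
    (hD : ∀ t : ℝ, T ≤ t → (2:ℝ) ^ (-ε) * M t ≤ M (2 * t) ∧ M (2 * t) ≤ (2:ℝ) ^ ε * M t) :
    ∀ (m : ℕ) (t : ℝ), T ≤ t →
      k (t * 2 ^ m) ≤ ENNReal.ofReal ((2:ℝ) ^ (ε - a)) ^ m * k t := by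
  intro m
  induction m with
  | zero => intro t ht; simp
  | succ m ih =>
    intro t ht
    have htm : T ≤ t * 2 ^ m := by
      calc T ≤ t := ht
        _ = t * 1 := by ring
        _ ≤ t * 2 ^ m := by
          apply mul_le_mul_of_nonneg_left _ (by linarith)
          exact one_le_pow₀ (by norm_num)
    have h1 : k (t * 2 ^ (m+1)) ≤ ENNReal.ofReal ((2:ℝ) ^ (ε - a)) * k (t * 2 ^ m) := by
      have := hk.step_up hT hD htm
      rwa [show t * 2 ^ m * 2 = t * 2 ^ (m+1) by ring] at this
    calc k (t * 2 ^ (m+1)) ≤ ENNReal.ofReal ((2:ℝ) ^ (ε - a)) * k (t * 2 ^ m) := h1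
      _ ≤ ENNReal.ofReal ((2:ℝ) ^ (ε - a)) * (ENNReal.ofReal ((2:ℝ) ^ (ε - a)) ^ m * k t) :=
          mul_le_mul_right (ih t ht) _
      _ = ENNReal.ofReal ((2:ℝ) ^ (ε - a)) ^ (m+1) * k t := by ring

lemma chain_down (hk : TailFun k M a) {ε : ℝ} {T : ℝ} (hT : 2 < T)
    (hD : ∀ t : ℝ, T ≤ t → (2:ℝ) ^ (-ε) * M t ≤ M (2 * t) ∧ M (2 * t) ≤ (2:ℝ) ^ ε * M t) :
    ∀ (m : ℕ) (t : ℝ), T ≤ t →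
      k t ≤ ENNReal.ofReal ((2:ℝ) ^ (a + ε)) ^ m * k (t * 2 ^ m) := by
  intro m
  induction m with
  | zero => intro t ht; simp
  | succ m ih =>
    intro t ht
    have htm : T ≤ t * 2 ^ m := by
      calc T ≤ t := ht
        _ = t * 1 := by ring
        _ ≤ t * 2 ^ m := by
          apply mul_le_mul_of_nonneg_left _ (by linarith)
          exact one_le_pow₀ (by norm_num)
    have h1 : k (t * 2 ^ m) ≤ ENNReal.ofReal ((2:ℝ) ^ (a + ε)) * k (t * 2 ^ (m+1)) := by
      have := hk.step_down hT hD htm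
      rwa [show t * 2 ^ m * 2 = t * 2 ^ (m+1) by ring] at this
    calc k t ≤ ENNReal.ofReal ((2:ℝ) ^ (a + ε)) ^ m * k (t * 2 ^ m) := ih t ht
      _ ≤ ENNReal.ofReal ((2:ℝ) ^ (a + ε)) ^ m *
          (ENNReal.ofReal ((2:ℝ) ^ (a + ε)) * k (t * 2 ^ (m+1))) :=
          mul_le_mul_right h1 _
      _ = ENNReal.ofReal ((2:ℝ) ^ (a + ε)) ^ (m+1) * k (t * 2 ^ (m+1)) := by ring

end TailFun

namespace TailFun

variable {k : ℝ → ℝ≥0∞} {M : ℝ → ℝ} {a : ℝ}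

lemma pow2_rpow_le (m : ℕ) (s c : ℝ) (hs : 1 ≤ s) (hm2 : s < 2^(m+1)) (hc : c ≤ 0) :
    ((2:ℝ) ^ (m:ℕ)) ^ c ≤ (2:ℝ)^(-c) * s ^ c := by
  have h2m : (0:ℝ) < 2 ^ (m:ℕ) := by positivity
  have hs2 : s / 2 ≤ (2:ℝ) ^ (m:ℕ) := by
    have h : s < 2 * 2 ^ (m:ℕ) := by rw [pow_succ] at hm2; linarith
    linarith
  have hsd : (0:ℝ) < s / 2 := by linarith
  calc ((2:ℝ) ^ (m:ℕ)) ^ c ≤ (s/2) ^ c := Real.rpow_le_rpow_of_nonpos hsd hs2 hc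
    _ = (2:ℝ)^(-c) * s ^ c := by
      rw [Real.div_rpow (by linarith) (by norm_num), Real.rpow_neg (by norm_num)]
      field_simp

lemma ratio_up (hk : TailFun k M a) {ε : ℝ} (hε : 0 < ε) (hεa : ε < a) :
    ∃ C : ℝ≥0∞, C ≠ ⊤ ∧ 1 ≤ C ∧ ∃ T : ℝ, 2 < T ∧ ∀ t s : ℝ, T ≤ t → 1 ≤ s →
      k (t * s) ≤ C * ENNReal.ofReal (s ^ (ε - a)) * k t := by
  obtain ⟨T, hT, hD⟩ := hk.doubling hε
  refine ⟨ENNReal.ofReal ((2:ℝ) ^ (a - ε)) + 1, by simp, le_add_self, T, hT, ?_⟩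
  intro t s ht hs
  obtain ⟨m, hm1, hm2⟩ := exists_pow_two_bound s hs
  have htpos : (0:ℝ) < t := by linarith
  have h1 : k (t * s) ≤ k (t * 2 ^ m) := by
    apply hk.anti (by positivity)
    exact mul_le_mul_of_nonneg_left hm1 (le_of_lt htpos)
  have h2 := hk.chain_up hT hD m t ht
  have h3 : ENNReal.ofReal ((2:ℝ) ^ (ε - a)) ^ m
      ≤ ENNReal.ofReal ((2:ℝ)^(a-ε)) * ENNReal.ofReal (s ^ (ε - a)) := by
    rw [← ENNReal.ofReal_pow (by positivity), ← ENNReal.ofReal_mul (by positivity)]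
    apply ENNReal.ofReal_le_ofReal
    have e1 : ((2:ℝ) ^ (ε - a)) ^ m = ((2:ℝ) ^ (m:ℕ) : ℝ) ^ (ε - a) := by
      rw [← Real.rpow_natCast ((2:ℝ) ^ (ε-a)) m, ← Real.rpow_mul (by norm_num),
        ← Real.rpow_natCast (2:ℝ) m, ← Real.rpow_mul (by norm_num)]
      ring_nf
    rw [e1]
    have := pow2_rpow_le m s (ε - a) hs hm2 (by linarith)
    rw [show -(ε-a) = a - ε by ring] at this
    exact this
  calc k (t * s) ≤ k (t * 2 ^ m) := h1
    _ ≤ ENNReal.ofReal ((2:ℝ) ^ (ε - a)) ^ m * k t := h2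
    _ ≤ (ENNReal.ofReal ((2:ℝ)^(a-ε)) * ENNReal.ofReal (s ^ (ε - a))) * k t :=
        mul_le_mul_left h3 _
    _ ≤ ((ENNReal.ofReal ((2:ℝ)^(a-ε)) + 1) * ENNReal.ofReal (s ^ (ε - a))) * k t :=
        mul_le_mul_left (mul_le_mul_left (self_le_add_right _ _) _) _
end TailFun

namespace TailFun

variable {k : ℝ → ℝ≥0∞} {M : ℝ → ℝ} {a : ℝ}

lemma ratio_down (hk : TailFun k M a) {ε : ℝ} (hε : 0 < ε) :
    ∃ C : ℝ≥0∞, C ≠ ⊤ ∧ 1 ≤ C ∧ ∀ t s : ℝ, 0 < t → 1 ≤ s →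
      k (t / s) ≤ C * ENNReal.ofReal (s ^ (a + ε)) * k t := by
  obtain ⟨T, hT, hD⟩ := hk.doubling hε
  have hTpos : (0:ℝ) < T := by linarith
  set κ := k (2 * T) with hκdef
  have hκpos : 0 < κ := hk.kpos (by linarith)
  have hκtop : κ ≠ ⊤ := (lt_of_le_of_lt (hk.le_one _) (by norm_num)).ne
  have hκ0 : κ ≠ 0 := hκpos.ne'
  set c2 : ℝ≥0∞ := ENNReal.ofReal ((2:ℝ) ^ (a + ε)) with hc2def
  have hgood : ∀ t s : ℝ, 1 ≤ s → T ≤ t / s →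
      k (t / s) ≤ c2 * ENNReal.ofReal (s ^ (a + ε)) * k t := by
    intro t s hs hts
    have hspos : (0:ℝ) < s := by linarith
    have hτpos : (0:ℝ) < t / s := by linarith
    have htpos : (0:ℝ) < t := by
      have := div_pos_iff.mp hτpos
      rcases this with ⟨h1, _⟩ | ⟨_, h2⟩
      · exact h1
      · linarith
    have hapos : 0 < a := hk.apos
    obtain ⟨m, hm1, hm2⟩ := exists_pow_two_bound s hs
    have hchain := hk.chain_down hT hD (m+1) (t/s) hts
    have hle : t ≤ t / s * 2 ^ (m+1) := by
      calc t = t / s * s := by field_simp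
        _ ≤ t / s * 2 ^ (m+1) := mul_le_mul_of_nonneg_left (le_of_lt hm2) (le_of_lt hτpos)
    have h2 : k (t / s * 2 ^ (m+1)) ≤ k t := hk.anti htpos hle
    have h3 : ENNReal.ofReal ((2:ℝ) ^ (a + ε)) ^ (m+1)
        ≤ c2 * ENNReal.ofReal (s ^ (a + ε)) := by
      rw [hc2def, ← ENNReal.ofReal_pow (by positivity), ← ENNReal.ofReal_mul (by positivity)]
      apply ENNReal.ofReal_le_ofReal
      have e1 : ((2:ℝ) ^ (a + ε)) ^ (m+1) = ((2:ℝ) ^ ((m+1):ℕ) : ℝ) ^ (a + ε) := by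
        rw [← Real.rpow_natCast ((2:ℝ) ^ (a+ε)) (m+1), ← Real.rpow_mul (by norm_num),
          ← Real.rpow_natCast (2:ℝ) (m+1), ← Real.rpow_mul (by norm_num)]
        ring_nf
      rw [e1]
      have hb : ((2:ℝ) ^ ((m+1):ℕ)) ≤ 2 * s := by
        rw [pow_succ, mul_comm]
        exact mul_le_mul_of_nonneg_left hm1 (by norm_num)
      calc ((2:ℝ) ^ ((m+1):ℕ)) ^ (a + ε) ≤ (2*s) ^ (a+ε) :=
            Real.rpow_le_rpow (by positivity) hb (by linarith)
        _ = 2 ^ (a+ε) * s ^ (a+ε) := Real.mul_rpow (by norm_num) (by linarith)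
    calc k (t/s) ≤ ENNReal.ofReal ((2:ℝ) ^ (a + ε)) ^ (m+1) * k (t/s * 2 ^ (m+1)) := hchain
      _ ≤ ENNReal.ofReal ((2:ℝ) ^ (a + ε)) ^ (m+1) * k t := mul_le_mul_right h2 _
      _ ≤ c2 * ENNReal.ofReal (s ^ (a + ε)) * k t := mul_le_mul_left h3 _
  set C : ℝ≥0∞ := (1 + κ⁻¹) * (c2 + 1) with hCdef
  have hc2top : c2 ≠ ⊤ := ENNReal.ofReal_ne_top
  have hCtop : C ≠ ⊤ := by
    apply ENNReal.mul_ne_top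
    · simp [ENNReal.add_ne_top, ENNReal.inv_ne_top.mpr hκ0]
    · simp [ENNReal.add_ne_top, hc2top]
  have hC1 : 1 ≤ C := by
    calc (1:ℝ≥0∞) = 1 * 1 := (one_mul 1).symm
      _ ≤ C := mul_le_mul' (self_le_add_right _ _) (le_add_self)
  refine ⟨C, hCtop, hC1, ?_⟩
  intro t s htpos hs
  have hapos : 0 < a := hk.apos
  have hspos : (0:ℝ) < s := by linarith
  have hsr1 : (1:ℝ≥0∞) ≤ ENNReal.ofReal (s ^ (a + ε)) := by
    rw [show (1:ℝ≥0∞) = ENNReal.ofReal 1 by simp]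
    exact ENNReal.ofReal_le_ofReal (Real.one_le_rpow hs (by linarith))
  rcases le_or_gt T (t / s) with hgd | hbad
  · calc k (t/s) ≤ c2 * ENNReal.ofReal (s ^ (a + ε)) * k t := hgood t s hs hgd
      _ ≤ C * ENNReal.ofReal (s ^ (a + ε)) * k t := by
        apply mul_le_mul_left
        apply mul_le_mul_left
        calc c2 ≤ c2 + 1 := self_le_add_right _ _
          _ = 1 * (c2 + 1) := (one_mul _).symm
          _ ≤ C := mul_le_mul_left (self_le_add_right _ _) _
  · rcases le_or_gt t (2 * T) with hsm | hbig
    · have hkt : κ ≤ k t := hk.anti htpos hsm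
      calc k (t/s) ≤ 1 := hk.le_one _
        _ = κ⁻¹ * κ := (ENNReal.inv_mul_cancel hκ0 hκtop).symm
        _ ≤ κ⁻¹ * k t := mul_le_mul_right hkt _
        _ ≤ C * ENNReal.ofReal (s ^ (a + ε)) * k t := by
          apply mul_le_mul_left
          calc κ⁻¹ = κ⁻¹ * 1 := (mul_one _).symm
            _ ≤ C * ENNReal.ofReal (s ^ (a + ε)) := by
              apply mul_le_mul' _ hsr1
              calc κ⁻¹ ≤ 1 + κ⁻¹ := le_add_self
                _ = (1 + κ⁻¹) * 1 := (mul_one _).symm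
                _ ≤ C := mul_le_mul_right (le_add_self) _
    · -- t > 2T, t/s < T
      have hs' : (1:ℝ) ≤ t / (2*T) := by
        rw [le_div_iff₀ (by linarith)]
        linarith
      have heq : t / (t / (2*T)) = 2*T := by
        field_simp
      have hgd' : T ≤ t / (t / (2*T)) := by rw [heq]; linarith
      have hg := hgood t (t/(2*T)) hs' hgd'
      rw [heq] at hg
      have h5 : t < T * s := by rw [div_lt_iff₀ hspos] at hbad; linarith [hbad]
      have hs'le : t / (2*T) ≤ s := by
        rw [div_le_iff₀ (by linarith)]
        nlinarith [hTpos, hspos]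
      have hmono : ENNReal.ofReal ((t/(2*T)) ^ (a + ε)) ≤ ENNReal.ofReal (s ^ (a + ε)) :=
        ENNReal.ofReal_le_ofReal (Real.rpow_le_rpow (by positivity) hs'le (by linarith))
      calc k (t/s) ≤ 1 := hk.le_one _
        _ = κ⁻¹ * κ := (ENNReal.inv_mul_cancel hκ0 hκtop).symm
        _ ≤ κ⁻¹ * (c2 * ENNReal.ofReal ((t/(2*T)) ^ (a + ε)) * k t) := mul_le_mul_right hg _
        _ ≤ κ⁻¹ * (c2 * ENNReal.ofReal (s ^ (a + ε)) * k t) := by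
          apply mul_le_mul_right
          exact mul_le_mul_left (mul_le_mul_right hmono _) _
        _ = (κ⁻¹ * c2) * ENNReal.ofReal (s ^ (a + ε)) * k t := by ring
        _ ≤ C * ENNReal.ofReal (s ^ (a + ε)) * k t := by
          apply mul_le_mul_left
          apply mul_le_mul_left
          calc κ⁻¹ * c2 ≤ (1 + κ⁻¹) * (c2 + 1) :=
            mul_le_mul' (le_add_self) (self_le_add_right _ _)
            _ = C := rfl

lemma poly_up (hk : TailFun k M a) {ε : ℝ} (hε : 0 < ε) (hεa : ε < a) :
    ∃ C : ℝ≥0∞, C ≠ ⊤ ∧ ∃ T : ℝ, 2 < T ∧ ∀ t : ℝ, T ≤ t →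
      k t ≤ C * ENNReal.ofReal (t ^ (ε - a)) := by
  obtain ⟨C₀, hC₀top, hC₀1, T, hT, hC₀⟩ := hk.ratio_up hε hεa
  have hTpos : (0:ℝ) < T := by linarith
  refine ⟨C₀ * ENNReal.ofReal ((T ^ (ε-a))⁻¹), ENNReal.mul_ne_top hC₀top ENNReal.ofReal_ne_top,
    T, hT, ?_⟩
  intro t ht
  have htpos : (0:ℝ) < t := by linarith
  have hs : (1:ℝ) ≤ t / T := by rw [le_div_iff₀ hTpos]; linarith
  have heq : T * (t / T) = t := by field_simp
  have h1 := hC₀ T (t/T) le_rfl hs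
  rw [heq] at h1
  have h2 : ((t / T) ^ (ε - a)) = t ^ (ε-a) * (T ^ (ε-a))⁻¹ := by
    rw [Real.div_rpow (le_of_lt htpos) (le_of_lt hTpos)]
    rfl
  calc k t ≤ C₀ * ENNReal.ofReal ((t/T) ^ (ε - a)) * k T := h1
    _ ≤ C₀ * ENNReal.ofReal ((t/T) ^ (ε - a)) * 1 := mul_le_mul_right (hk.le_one T) _
    _ = C₀ * ENNReal.ofReal (t ^ (ε-a) * (T ^ (ε-a))⁻¹) := by rw [mul_one, h2]
    _ = C₀ * (ENNReal.ofReal (t ^ (ε-a)) * ENNReal.ofReal ((T ^ (ε-a))⁻¹)) := by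
        rw [ENNReal.ofReal_mul (by positivity)]
    _ = C₀ * ENNReal.ofReal ((T ^ (ε-a))⁻¹) * ENNReal.ofReal (t ^ (ε - a)) := by ring

lemma abs_down (hk : TailFun k M a) {ε : ℝ} (hε : 0 < ε) :
    ∃ c : ℝ≥0∞, c ≠ 0 ∧ c ≠ ⊤ ∧ ∀ t : ℝ, 1 ≤ t →
      c * ENNReal.ofReal (t ^ (-(a + ε))) ≤ k t := by
  obtain ⟨C, hCtop, hC1, hC⟩ := hk.ratio_down hε
  have hk1pos : 0 < k 1 := hk.kpos one_pos
  have hk1top : k 1 ≠ ⊤ := (lt_of_le_of_lt (hk.le_one _) (by norm_num)).ne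
  have hC0 : C ≠ 0 := by
    intro h; rw [h] at hC1; exact (by norm_num : ¬ ((1:ℝ≥0∞) ≤ 0)) hC1
  refine ⟨C⁻¹ * k 1, by
      simp only [ne_eq, mul_eq_zero, not_or]
      exact ⟨ENNReal.inv_ne_zero.mpr hCtop, hk1pos.ne'⟩,
    ENNReal.mul_ne_top (ENNReal.inv_ne_top.mpr hC0) hk1top, ?_⟩
  intro t ht
  have htpos : (0:ℝ) < t := by linarith
  have h1 := hC t t htpos ht
  rw [div_self htpos.ne'] at h1
  set X := ENNReal.ofReal (t ^ (a + ε)) with hXdef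
  have hX0 : X ≠ 0 := by
    rw [hXdef]
    simp only [ne_eq, ENNReal.ofReal_eq_zero, not_le]
    positivity
  have hXtop : X ≠ ⊤ := ENNReal.ofReal_ne_top
  have hXinv : X⁻¹ = ENNReal.ofReal (t ^ (-(a + ε))) := by
    rw [hXdef, Real.rpow_neg (le_of_lt htpos), ENNReal.ofReal_inv_of_pos (by positivity)]
  have h2 : (C * X)⁻¹ * k 1 ≤ k t := by
    have h3 : (C * X)⁻¹ * (C * X * k t) = k t := by
      rw [← mul_assoc, ENNReal.inv_mul_cancel (by simp [hC0, hX0]) (ENNReal.mul_ne_top hCtop hXtop), one_mul]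
    calc (C * X)⁻¹ * k 1 ≤ (C * X)⁻¹ * (C * X * k t) := mul_le_mul_right h1 _
      _ = k t := h3
  have h4 : (C * X)⁻¹ = C⁻¹ * X⁻¹ := ENNReal.mul_inv (Or.inl hC0) (Or.inl hCtop)
  rw [h4] at h2
  calc C⁻¹ * k 1 * ENNReal.ofReal (t ^ (-(a+ε))) = C⁻¹ * X⁻¹ * k 1 := by rw [← hXinv]; ring
    _ ≤ k t := h2

end TailFun

section Psi

open Set

noncomputable def psiFun (ν : Measure ℝ) (t : ℝ) : ℝ≥0∞ :=
  (ν.prod ν) {p : ℝ × ℝ | t * p.2 < p.1}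

lemma psiSet_meas (t : ℝ) : MeasurableSet {p : ℝ × ℝ | t * p.2 < p.1} :=
  measurableSet_lt (measurable_snd.const_mul t) measurable_fst

variable {ν : Measure ℝ} [IsProbabilityMeasure ν]

lemma psiFun_repG (t : ℝ) : psiFun ν t = ∫⁻ y, ν (Set.Ioi (t * y)) ∂ν := by
  rw [psiFun, Measure.prod_apply_symm (psiSet_meas t)]
  rfl

lemma psiFun_repH {t : ℝ} (ht : 0 < t) : psiFun ν t = ∫⁻ x, ν (Set.Iio (x / t)) ∂ν := by
  rw [psiFun, Measure.prod_apply (psiSet_meas t)]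
  congr 1
  funext x
  congr 1
  ext y
  simp only [Set.mem_preimage, Set.mem_setOf_eq, Set.mem_Iio]
  rw [lt_div_iff₀ ht, mul_comm]

lemma psiFun_lower {t : ℝ} (ht : 0 < t) :
    ν (Set.Ioi 1) * ν (Set.Iio t⁻¹) ≤ psiFun ν t := by
  rw [psiFun, ← Measure.prod_prod]
  apply measure_mono
  rintro ⟨x, y⟩ ⟨hx, hy⟩
  simp only [Set.mem_Ioi, Set.mem_Iio] at hx hy
  simp only [Set.mem_setOf_eq]
  calc t * y < t * t⁻¹ := by exact mul_lt_mul_of_pos_left hy ht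
    _ = 1 := mul_inv_cancel₀ ht.ne'
    _ < x := hx

lemma psiFun_pos {t : ℝ} (ht : 0 < t)
    {Linf L0 : ℝ → ℝ} {ainf a0 : ℝ}
    (hg : TailFun (fun u => ν (Set.Ioi u)) Linf ainf)
    (hh : TailFun (fun u => ν (Set.Iio u⁻¹)) L0 a0) : 0 < psiFun ν t := by
  have h1 : 0 < ν (Set.Ioi 1) := hg.kpos one_pos
  have h2 : 0 < ν (Set.Iio t⁻¹) := by
    have := hh.kpos ht
    simpa using this
  calc (0:ℝ≥0∞) < ν (Set.Ioi 1) * ν (Set.Iio t⁻¹) := by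
        exact ENNReal.mul_pos h1.ne' h2.ne'
    _ ≤ psiFun ν t := psiFun_lower ht

lemma psiFun_le_one (t : ℝ) : psiFun ν t ≤ 1 := by
  rw [psiFun]
  have : ((ν.prod ν) : Measure (ℝ × ℝ)) Set.univ = 1 := measure_univ
  calc (ν.prod ν) {p : ℝ × ℝ | t * p.2 < p.1} ≤ (ν.prod ν) Set.univ :=
      measure_mono (Set.subset_univ _)
    _ = 1 := measure_univ

lemma psi_ratio_down_G {Linf : ℝ → ℝ} {ainf : ℝ}
    (hg : TailFun (fun u => ν (Set.Ioi u)) Linf ainf) {ε : ℝ} (hε : 0 < ε) :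
    ∃ C : ℝ≥0∞, C ≠ ⊤ ∧ 1 ≤ C ∧ ∀ t s : ℝ, 0 < t → 1 ≤ s →
      psiFun ν (t / s) ≤ C * ENNReal.ofReal (s ^ (ainf + ε)) * psiFun ν t := by
  obtain ⟨C, hCtop, hC1, hC⟩ := hg.ratio_down hε
  refine ⟨C, hCtop, hC1, ?_⟩
  intro t s ht hs
  have hspos : (0:ℝ) < s := by linarith
  have hsr1 : (1:ℝ≥0∞) ≤ ENNReal.ofReal (s ^ (ainf + ε)) := by
    rw [show (1:ℝ≥0∞) = ENNReal.ofReal 1 by simp]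
    exact ENNReal.ofReal_le_ofReal (Real.one_le_rpow hs (by linarith [hg.apos]))
  rw [psiFun_repG, psiFun_repG]
  have hpt : ∀ y : ℝ, ν (Set.Ioi (t / s * y)) ≤
      (C * ENNReal.ofReal (s ^ (ainf + ε))) * ν (Set.Ioi (t * y)) := by
    intro y
    rcases le_or_gt y 0 with hy | hy
    · have hsub : Set.Ioi (t / s * y) ⊆ Set.Ioi (t * y) := by
        apply Set.Ioi_subset_Ioi
        apply mul_le_mul_of_nonpos_right _ hy
        exact div_le_self ht.le hs
      calc ν (Set.Ioi (t / s * y)) ≤ ν (Set.Ioi (t * y)) := measure_mono hsub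
        _ = 1 * ν (Set.Ioi (t * y)) := (one_mul _).symm
        _ ≤ (C * ENNReal.ofReal (s ^ (ainf + ε))) * ν (Set.Ioi (t * y)) := by
            apply mul_le_mul_left
            calc (1:ℝ≥0∞) = 1 * 1 := (one_mul 1).symm
              _ ≤ C * ENNReal.ofReal (s ^ (ainf + ε)) := mul_le_mul' hC1 hsr1
    · have heq : t / s * y = (t * y) / s := by ring
      rw [heq]
      have := hC (t * y) s (by positivity) hs
      simpa [mul_assoc] using this
  calc ∫⁻ y, ν (Set.Ioi (t / s * y)) ∂ν
      ≤ ∫⁻ y, (C * ENNReal.ofReal (s ^ (ainf + ε))) * ν (Set.Ioi (t * y)) ∂ν :=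
        lintegral_mono hpt
    _ = (C * ENNReal.ofReal (s ^ (ainf + ε))) * ∫⁻ y, ν (Set.Ioi (t * y)) ∂ν :=
        lintegral_const_mul' _ _ (ENNReal.mul_ne_top hCtop ENNReal.ofReal_ne_top)
    _ = C * ENNReal.ofReal (s ^ (ainf + ε)) * ∫⁻ y, ν (Set.Ioi (t * y)) ∂ν := by ring

lemma psi_ratio_down_H {L0 : ℝ → ℝ} {a0 : ℝ}
    (hh : TailFun (fun u => ν (Set.Iio u⁻¹)) L0 a0) {ε : ℝ} (hε : 0 < ε) :
    ∃ C : ℝ≥0∞, C ≠ ⊤ ∧ 1 ≤ C ∧ ∀ t s : ℝ, 0 < t → 1 ≤ s →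
      psiFun ν (t / s) ≤ C * ENNReal.ofReal (s ^ (a0 + ε)) * psiFun ν t := by
  obtain ⟨C, hCtop, hC1, hC⟩ := hh.ratio_down hε
  refine ⟨C, hCtop, hC1, ?_⟩
  intro t s ht hs
  have hspos : (0:ℝ) < s := by linarith
  have htspos : (0:ℝ) < t / s := by positivity
  have hsr1 : (1:ℝ≥0∞) ≤ ENNReal.ofReal (s ^ (a0 + ε)) := by
    rw [show (1:ℝ≥0∞) = ENNReal.ofReal 1 by simp]
    exact ENNReal.ofReal_le_ofReal (Real.one_le_rpow hs (by linarith [hh.apos]))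
  rw [psiFun_repH htspos, psiFun_repH ht]
  have hpt : ∀ x : ℝ, ν (Set.Iio (x / (t / s))) ≤
      (C * ENNReal.ofReal (s ^ (a0 + ε))) * ν (Set.Iio (x / t)) := by
    intro x
    rcases le_or_gt x 0 with hx | hx
    · have hsub : Set.Iio (x / (t / s)) ⊆ Set.Iio (x / t) := by
        apply Set.Iio_subset_Iio
        rw [div_div_eq_mul_div]
        rw [div_le_div_iff_of_pos_right ht]
        nlinarith
      calc ν (Set.Iio (x / (t/s))) ≤ ν (Set.Iio (x / t)) := measure_mono hsub
        _ = 1 * ν (Set.Iio (x / t)) := (one_mul _).symm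
        _ ≤ (C * ENNReal.ofReal (s ^ (a0 + ε))) * ν (Set.Iio (x / t)) := by
            apply mul_le_mul_left
            calc (1:ℝ≥0∞) = 1 * 1 := (one_mul 1).symm
              _ ≤ C * ENNReal.ofReal (s ^ (a0 + ε)) := mul_le_mul' hC1 hsr1
    · have he1 : x / (t / s) = ((t / x) / s)⁻¹ := by
        field_simp
      have he2 : x / t = (t / x)⁻¹ := by
        field_simp
      rw [he1, he2]
      have := hC (t / x) s (by positivity) hs
      simpa [mul_assoc] using this
  calc ∫⁻ x, ν (Set.Iio (x / (t / s))) ∂ν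
      ≤ ∫⁻ x, (C * ENNReal.ofReal (s ^ (a0 + ε))) * ν (Set.Iio (x / t)) ∂ν :=
        lintegral_mono hpt
    _ = (C * ENNReal.ofReal (s ^ (a0 + ε))) * ∫⁻ x, ν (Set.Iio (x / t)) ∂ν :=
        lintegral_const_mul' _ _ (ENNReal.mul_ne_top hCtop ENNReal.ofReal_ne_top)
    _ = C * ENNReal.ofReal (s ^ (a0 + ε)) * ∫⁻ x, ν (Set.Iio (x / t)) ∂ν := by ring

end Psi

section Psi2

variable {ν : Measure ℝ} [IsProbabilityMeasure ν]

lemma psi_ratio_up {Linf L0 : ℝ → ℝ} {ainf a0 : ℝ}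
    (hg : TailFun (fun u => ν (Set.Ioi u)) Linf ainf)
    (hh : TailFun (fun u => ν (Set.Iio u⁻¹)) L0 a0) :
    ∃ C : ℝ≥0∞, C ≠ ⊤ ∧ ∃ T : ℝ, 2 < T ∧ ∀ t s : ℝ, T ≤ t → 1 ≤ s →
      psiFun ν (t * s) ≤
        C * ENNReal.ofReal (s ^ (-(min ainf a0 / 4))) * psiFun ν t := by
  have hai := hg.apos
  have ha0 := hh.apos
  obtain ⟨Cg, hCgtop, hCg1, Tg, hTg, hGup⟩ := hg.ratio_up (half_pos hai) (half_lt_self hai)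
  obtain ⟨Cg', hCg'top, Tg', hTg', hGpoly⟩ := hg.poly_up (half_pos hai) (half_lt_self hai)
  obtain ⟨Ch, hChtop, hCh1, Th, hTh, hHup⟩ := hh.ratio_up (half_pos ha0) (half_lt_self ha0)
  obtain ⟨Ch', hCh'top, hCh'1, hHdown⟩ := hh.ratio_down (one_pos)
  set g1 : ℝ≥0∞ := ν (Set.Ioi 1) with hg1def
  have hg1pos : 0 < g1 := hg.kpos one_pos
  have hg1top : g1 ≠ ⊤ := (lt_of_le_of_lt (hg.le_one 1) (by norm_num)).ne
  set Tm : ℝ := max Tg Tg' with hTmdef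
  have hTm2 : 2 < Tm := lt_of_lt_of_le hTg (le_max_left _ _)
  have hTmpos : (0:ℝ) < Tm := by linarith
  set T : ℝ := Tm * Th with hTdef
  have hTh1 : (1:ℝ) < Th := by linarith
  have hT2 : 2 < T := by nlinarith
  have hTpos : (0:ℝ) < T := by linarith
  set β : ℝ := min ainf a0 / 4 with hβdef
  have hβpos : 0 < β := by
    have : 0 < min ainf a0 := lt_min hai ha0
    positivity
  -- the link : ν (Iio (Tm/t)) ≤ Ch' * ofReal(Tm^(a0+1)) * g1⁻¹ * psiFun ν t
  have hlink : ∀ t : ℝ, T ≤ t →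
      ν (Set.Iio (Tm / t)) ≤ (Ch' * ENNReal.ofReal (Tm ^ (a0 + 1)) * g1⁻¹) * psiFun ν t := by
    intro t ht
    have htpos : (0:ℝ) < t := by linarith
    have h1 : ν (Set.Iio (Tm / t)) = (fun u => ν (Set.Iio u⁻¹)) (t / Tm) := by
      simp only []
      congr 1
      rw [inv_div]
    have h2 := hHdown t Tm htpos (by linarith)
    have h3 : ν (Set.Iio t⁻¹) ≤ g1⁻¹ * psiFun ν t := by
      have h4 := psiFun_lower (ν := ν) htpos
      calc ν (Set.Iio t⁻¹) = 1 * ν (Set.Iio t⁻¹) := (one_mul _).symm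
        _ = (g1⁻¹ * g1) * ν (Set.Iio t⁻¹) := by
            rw [ENNReal.inv_mul_cancel hg1pos.ne' hg1top]
        _ = g1⁻¹ * (g1 * ν (Set.Iio t⁻¹)) := by ring
        _ ≤ g1⁻¹ * psiFun ν t := mul_le_mul_right h4 _
    calc ν (Set.Iio (Tm / t)) = (fun u => ν (Set.Iio u⁻¹)) (t / Tm) := h1
      _ ≤ Ch' * ENNReal.ofReal (Tm ^ (a0 + 1)) * ν (Set.Iio t⁻¹) := h2
      _ ≤ Ch' * ENNReal.ofReal (Tm ^ (a0 + 1)) * (g1⁻¹ * psiFun ν t) := mul_le_mul_right h3 _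
      _ = (Ch' * ENNReal.ofReal (Tm ^ (a0 + 1)) * g1⁻¹) * psiFun ν t := by ring
  set K2 : ℝ≥0∞ := Ch * (Ch' * ENNReal.ofReal (Tm ^ (a0 + 1)) * g1⁻¹) with hK2def
  set K3 : ℝ≥0∞ := Cg' * (Ch' * ENNReal.ofReal (Tm ^ (a0 + 1)) * g1⁻¹) with hK3def
  refine ⟨Cg + K2 + K3, ?_, T, hT2, ?_⟩
  · have hlinktop : Ch' * ENNReal.ofReal (Tm ^ (a0 + 1)) * g1⁻¹ ≠ ⊤ := by
      apply ENNReal.mul_ne_top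
      apply ENNReal.mul_ne_top hCh'top ENNReal.ofReal_ne_top
      exact ENNReal.inv_ne_top.mpr hg1pos.ne'
    simp only [ENNReal.add_ne_top]
    exact ⟨⟨hCgtop, ENNReal.mul_ne_top hChtop hlinktop⟩, ENNReal.mul_ne_top hCg'top hlinktop⟩
  intro t s ht hs
  have htpos : (0:ℝ) < t := by linarith
  have hspos : (0:ℝ) < s := by linarith
  set sq : ℝ := s ^ ((1:ℝ)/2) with hsqdef
  have hsq1 : (1:ℝ) ≤ sq := Real.one_le_rpow hs (by norm_num)
  have hsqpos : (0:ℝ) < sq := by linarith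
  have hsqsq : sq * sq = s := by
    rw [hsqdef, ← Real.rpow_add hspos]
    norm_num
  -- decomposition
  set U1 : Set (ℝ × ℝ) := {p : ℝ × ℝ | Tm / t ≤ p.2} ∩ {p : ℝ × ℝ | t * s * p.2 < p.1}
    with hU1def
  set U2 : Set (ℝ × ℝ) := Set.univ ×ˢ Set.Iio (Tm / (t * sq)) with hU2def
  set U3 : Set (ℝ × ℝ) := Set.Ioi (Tm * sq) ×ˢ Set.Iio (Tm / t) with hU3def
  have hsub : {p : ℝ × ℝ | (t * s) * p.2 < p.1} ⊆ U1 ∪ U2 ∪ U3 := by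
    rintro ⟨x, y⟩ hp
    simp only [Set.mem_setOf_eq] at hp
    by_cases h1 : Tm / t ≤ y
    · left; left
      exact ⟨h1, hp⟩
    · push_neg at h1
      by_cases h2 : y < Tm / (t * sq)
      · left; right
        exact ⟨Set.mem_univ _, h2⟩
      · push_neg at h2
        right
        constructor
        · simp only [Set.mem_Ioi]
          have hkey : Tm * sq ≤ t * s * y := by
            have h3 : t * s * (Tm / (t * sq)) ≤ t * s * y :=
              mul_le_mul_of_nonneg_left h2 (by positivity)
            have h4 : t * s * (Tm / (t * sq)) = Tm * sq := by
              rw [← hsqsq]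
              field_simp
            linarith
          calc Tm * sq ≤ t * s * y := hkey
            _ < x := hp
        · simpa using h1
  have hmeasU1 : MeasurableSet U1 :=
    (measurableSet_le measurable_const measurable_snd).inter
      (measurableSet_lt (measurable_snd.const_mul _) measurable_fst)
  -- bound U1
  have hbU1 : (ν.prod ν) U1 ≤ (Cg * ENNReal.ofReal (s ^ (-β))) * psiFun ν t := by
    rw [Measure.prod_apply_symm hmeasU1]
    have hpt : ∀ y : ℝ, ν ((fun x => (x, y)) ⁻¹' U1) ≤
        (Cg * ENNReal.ofReal (s ^ (-β))) * ν (Set.Ioi (t * y)) := by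
      intro y
      by_cases hy : Tm / t ≤ y
      · have hyTm : Tm ≤ t * y := by
          rw [div_le_iff₀ htpos] at hy
          linarith [hy]
        have hyTg : Tg ≤ t * y := le_trans (le_max_left _ _) hyTm
        have hpre : (fun x => (x, y)) ⁻¹' U1 = Set.Ioi (t * s * y) := by
          ext x
          simp only [hU1def, Set.mem_preimage, Set.mem_inter_iff, Set.mem_setOf_eq,
            Set.mem_Ioi]
          tauto
        rw [hpre]
        have := hGup (t * y) s hyTg hs
        have heq : t * y * s = t * s * y := by ring
        rw [heq] at this
        calc ν (Set.Ioi (t * s * y)) ≤ Cg * ENNReal.ofReal (s ^ (ainf/2 - ainf)) *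
              ν (Set.Ioi (t * y)) := this
          _ ≤ (Cg * ENNReal.ofReal (s ^ (-β))) * ν (Set.Ioi (t * y)) := by
            apply mul_le_mul_left
            apply mul_le_mul_right
            apply ENNReal.ofReal_le_ofReal
            apply Real.rpow_le_rpow_of_exponent_le hs
            rw [hβdef]
            have : min ainf a0 ≤ ainf := min_le_left _ _
            linarith
      · have hpre : (fun x => (x, y)) ⁻¹' U1 = ∅ := by
          ext x
          simp only [hU1def, Set.mem_preimage, Set.mem_inter_iff, Set.mem_setOf_eq,
            Set.mem_empty_iff_false, iff_false, not_and]
          intro h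
          exact absurd h hy
        rw [hpre]
        simp
    calc ∫⁻ y, ν ((fun x => (x, y)) ⁻¹' U1) ∂ν
        ≤ ∫⁻ y, (Cg * ENNReal.ofReal (s ^ (-β))) * ν (Set.Ioi (t * y)) ∂ν :=
          lintegral_mono hpt
      _ = (Cg * ENNReal.ofReal (s ^ (-β))) * ∫⁻ y, ν (Set.Ioi (t * y)) ∂ν :=
          lintegral_const_mul' _ _ (ENNReal.mul_ne_top hCgtop ENNReal.ofReal_ne_top)
      _ = (Cg * ENNReal.ofReal (s ^ (-β))) * psiFun ν t := by rw [← psiFun_repG]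
  -- bound U2
  have hbU2 : (ν.prod ν) U2 ≤ (K2 * ENNReal.ofReal (s ^ (-β))) * psiFun ν t := by
    rw [hU2def, Measure.prod_prod, measure_univ, one_mul]
    have h1 : ν (Set.Iio (Tm / (t * sq))) = (fun u => ν (Set.Iio u⁻¹)) ((t / Tm) * sq) := by
      simp only []
      congr 1
      rw [mul_inv, inv_div]
      field_simp
    have hbase : Th ≤ t / Tm := by
      rw [le_div_iff₀ hTmpos]
      calc Th * Tm = Tm * Th := by ring
        _ = T := rfl
        _ ≤ t := ht
    have h2 := hHup (t / Tm) sq hbase hsq1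
    have h3 : ν (Set.Iio (Tm / t)) = (fun u => ν (Set.Iio u⁻¹)) (t / Tm) := by
      simp only []
      congr 1
      rw [inv_div]
    have h4 : ENNReal.ofReal (sq ^ (a0/2 - a0)) ≤ ENNReal.ofReal (s ^ (-β)) := by
      apply ENNReal.ofReal_le_ofReal
      have he : sq ^ (a0/2 - a0) = s ^ ((1/2) * (a0/2 - a0)) := by
        rw [hsqdef, ← Real.rpow_mul (le_of_lt hspos)]
      rw [he]
      apply Real.rpow_le_rpow_of_exponent_le hs
      rw [hβdef]
      have : min ainf a0 ≤ a0 := min_le_right _ _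
      linarith
    calc ν (Set.Iio (Tm / (t * sq))) = (fun u => ν (Set.Iio u⁻¹)) ((t / Tm) * sq) := h1
      _ ≤ Ch * ENNReal.ofReal (sq ^ (a0/2 - a0)) * (fun u => ν (Set.Iio u⁻¹)) (t / Tm) := h2
      _ = Ch * ENNReal.ofReal (sq ^ (a0/2 - a0)) * ν (Set.Iio (Tm / t)) := by rw [← h3]
      _ ≤ Ch * ENNReal.ofReal (s ^ (-β)) * ν (Set.Iio (Tm / t)) := by
          exact mul_le_mul_left (mul_le_mul_right h4 _) _
      _ ≤ Ch * ENNReal.ofReal (s ^ (-β)) *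
            ((Ch' * ENNReal.ofReal (Tm ^ (a0 + 1)) * g1⁻¹) * psiFun ν t) :=
          mul_le_mul_right (hlink t ht) _
      _ = (K2 * ENNReal.ofReal (s ^ (-β))) * psiFun ν t := by rw [hK2def]; ring
  -- bound U3
  have hbU3 : (ν.prod ν) U3 ≤ (K3 * ENNReal.ofReal (s ^ (-β))) * psiFun ν t := by
    rw [hU3def, Measure.prod_prod]
    have h1 : ν (Set.Ioi (Tm * sq)) ≤ Cg' * ENNReal.ofReal ((Tm * sq) ^ (ainf/2 - ainf)) := by
      have hTmsq : Tg' ≤ Tm * sq := by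
        calc Tg' ≤ Tm := le_max_right _ _
          _ = Tm * 1 := (mul_one _).symm
          _ ≤ Tm * sq := mul_le_mul_of_nonneg_left hsq1 (le_of_lt hTmpos)
      exact hGpoly (Tm * sq) hTmsq
    have h2 : ENNReal.ofReal ((Tm * sq) ^ (ainf/2 - ainf)) ≤ ENNReal.ofReal (s ^ (-β)) := by
      apply ENNReal.ofReal_le_ofReal
      rw [Real.mul_rpow (le_of_lt hTmpos) (le_of_lt hsqpos)]
      have hTm1 : Tm ^ (ainf/2 - ainf) ≤ 1 := by
        apply Real.rpow_le_one_of_one_le_of_nonpos (by linarith)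
        linarith
      have hsq2 : sq ^ (ainf/2 - ainf) ≤ s ^ (-β) := by
        have he : sq ^ (ainf/2 - ainf) = s ^ ((1/2) * (ainf/2 - ainf)) := by
          rw [hsqdef, ← Real.rpow_mul (le_of_lt hspos)]
        rw [he]
        apply Real.rpow_le_rpow_of_exponent_le hs
        rw [hβdef]
        have : min ainf a0 ≤ ainf := min_le_left _ _
        linarith
      calc Tm ^ (ainf/2 - ainf) * sq ^ (ainf/2 - ainf)
          ≤ 1 * (s ^ (-β)) := by
            apply mul_le_mul hTm1 hsq2 (by positivity) (by norm_num)
        _ = s ^ (-β) := one_mul _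
    calc ν (Set.Ioi (Tm * sq)) * ν (Set.Iio (Tm / t))
        ≤ (Cg' * ENNReal.ofReal (s ^ (-β))) *
            ((Ch' * ENNReal.ofReal (Tm ^ (a0 + 1)) * g1⁻¹) * psiFun ν t) := by
          apply mul_le_mul'
          · calc ν (Set.Ioi (Tm * sq)) ≤ Cg' * ENNReal.ofReal ((Tm * sq) ^ (ainf/2 - ainf)) :=
                h1
              _ ≤ Cg' * ENNReal.ofReal (s ^ (-β)) := mul_le_mul_right h2 _
          · exact hlink t ht
      _ = (K3 * ENNReal.ofReal (s ^ (-β))) * psiFun ν t := by rw [hK3def]; ring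
  -- combine
  calc psiFun ν (t * s) ≤ (ν.prod ν) (U1 ∪ U2 ∪ U3) := measure_mono hsub
    _ ≤ (ν.prod ν) (U1 ∪ U2) + (ν.prod ν) U3 := measure_union_le _ _
    _ ≤ ((ν.prod ν) U1 + (ν.prod ν) U2) + (ν.prod ν) U3 :=
        add_le_add_left (measure_union_le _ _) _
    _ ≤ ((Cg * ENNReal.ofReal (s ^ (-β))) * psiFun ν t +
          (K2 * ENNReal.ofReal (s ^ (-β))) * psiFun ν t) +
          (K3 * ENNReal.ofReal (s ^ (-β))) * psiFun ν t :=
        add_le_add (add_le_add hbU1 hbU2) hbU3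
    _ = (Cg + K2 + K3) * ENNReal.ofReal (s ^ (-β)) * psiFun ν t := by ring

end Psi2

lemma summable_quarter {cc : ℝ} (hcc : 0 < cc) :
    Summable (fun j : ℕ => ((j:ℝ)+1) * Real.exp (-(cc * (j:ℝ) ^ ((1:ℝ)/4)))) := by
  set c' : ℝ := cc / 2 ^ ((1:ℝ)/4) with hc'
  have h2q : (0:ℝ) < 2 ^ ((1:ℝ)/4) := Real.rpow_pos_of_pos two_pos _
  have hc'pos : 0 < c' := div_pos hcc h2q
  set K : ℝ := max 1 ((Nat.factorial 13 : ℝ) / c' ^ (13:ℕ)) with hK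
  have hK1 : (1:ℝ) ≤ K := le_max_left _ _
  have hKg : (Nat.factorial 13 : ℝ) / c' ^ (13:ℕ) ≤ K := le_max_right _ _
  have hsum : Summable (fun j : ℕ => K * ((j:ℝ)+1) ^ (-(9/4) : ℝ)) := by
    apply Summable.mul_left
    have h1 : Summable (fun n : ℕ => (n:ℝ) ^ (-(9/4):ℝ)) :=
      Real.summable_nat_rpow.mpr (by norm_num)
    have h2 := (summable_nat_add_iff 1).mpr h1
    apply h2.congr
    intro n
    push_cast
    ring_nf
  apply Summable.of_nonneg_of_le _ _ hsum
  · intro j; positivity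
  · intro j
    rcases Nat.eq_zero_or_pos j with hj | hj
    · subst hj
      simp only [Nat.cast_zero, zero_add, one_mul]
      rw [Real.zero_rpow (by norm_num), mul_zero, neg_zero, Real.exp_zero,
        Real.one_rpow]
      linarith
    · have hj1 : (1:ℝ) ≤ (j:ℝ) := by exact_mod_cast hj
      have hjp1 : (0:ℝ) < (j:ℝ)+1 := by linarith
      set X : ℝ := c' * ((j:ℝ)+1) ^ ((1:ℝ)/4) with hX
      have hq4pos : (0:ℝ) < ((j:ℝ)+1) ^ ((1:ℝ)/4) := Real.rpow_pos_of_pos hjp1 _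
      have hXpos : 0 < X := by rw [hX]; positivity
      have hXle : X ≤ cc * (j:ℝ) ^ ((1:ℝ)/4) := by
        rw [hX, hc', div_mul_eq_mul_div, div_le_iff₀ h2q]
        have h3 : ((j:ℝ)+1) ^ ((1:ℝ)/4) ≤ ((j:ℝ) * 2) ^ ((1:ℝ)/4) :=
          Real.rpow_le_rpow (by linarith) (by linarith) (by norm_num)
        have h4 : ((j:ℝ) * 2) ^ ((1:ℝ)/4) = (j:ℝ) ^ ((1:ℝ)/4) * 2 ^ ((1:ℝ)/4) :=
          Real.mul_rpow (by linarith) (by norm_num)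
        calc cc * (((j:ℝ)+1) ^ ((1:ℝ)/4)) ≤ cc * ((j:ℝ) ^ ((1:ℝ)/4) * 2 ^ ((1:ℝ)/4)) := by
              apply mul_le_mul_of_nonneg_left _ hcc.le
              rw [← h4]; exact h3
          _ = cc * (j:ℝ) ^ ((1:ℝ)/4) * 2 ^ ((1:ℝ)/4) := by ring
      have hexp1 : Real.exp (-(cc * (j:ℝ) ^ ((1:ℝ)/4))) ≤ Real.exp (-X) :=
        Real.exp_le_exp.mpr (by linarith)
      have hexp2 : Real.exp (-X) ≤ (Nat.factorial 13 : ℝ) / X ^ (13:ℕ) := by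
        have h5 : X ^ (13:ℕ) / (Nat.factorial 13 : ℝ) ≤ Real.exp X :=
          Real.pow_div_factorial_le_exp (hx := hXpos.le) (n := 13)
        rw [Real.exp_neg]
        have h6 : (0:ℝ) < X ^ (13:ℕ) / (Nat.factorial 13:ℝ) := by positivity
        calc (Real.exp X)⁻¹ ≤ (X ^ (13:ℕ) / (Nat.factorial 13:ℝ))⁻¹ :=
              inv_anti₀ h6 h5
          _ = (Nat.factorial 13 : ℝ) / X ^ (13:ℕ) := by rw [inv_div]
      have hX13 : X ^ (13:ℕ) = c' ^ (13:ℕ) * ((j:ℝ)+1) ^ ((13:ℝ)/4) := by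
        rw [hX, mul_pow]
        congr 1
        rw [← Real.rpow_natCast (((j:ℝ)+1) ^ ((1:ℝ)/4)) 13, ← Real.rpow_mul (by linarith)]
        norm_num
      have hdiv : ((j:ℝ)+1) / ((j:ℝ)+1) ^ ((13:ℝ)/4) = ((j:ℝ)+1) ^ (-(9/4):ℝ) := by
        have h7 : ((j:ℝ)+1) ^ ((1:ℝ) - 13/4) =
            ((j:ℝ)+1) ^ (1:ℝ) / ((j:ℝ)+1) ^ ((13:ℝ)/4) := Real.rpow_sub hjp1 _ _
        rw [Real.rpow_one] at h7
        rw [← h7]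
        norm_num
      have h13pos : (0:ℝ) < ((j:ℝ)+1) ^ ((13:ℝ)/4) := Real.rpow_pos_of_pos hjp1 _
      calc ((j:ℝ)+1) * Real.exp (-(cc * (j:ℝ) ^ ((1:ℝ)/4)))
          ≤ ((j:ℝ)+1) * ((Nat.factorial 13 : ℝ) / X ^ (13:ℕ)) :=
            mul_le_mul_of_nonneg_left (le_trans hexp1 hexp2) (by linarith)
        _ = ((Nat.factorial 13 : ℝ) / c' ^ (13:ℕ)) * (((j:ℝ)+1) / ((j:ℝ)+1) ^ ((13:ℝ)/4)) := by
            rw [hX13]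
            field_simp
        _ = ((Nat.factorial 13 : ℝ) / c' ^ (13:ℕ)) * ((j:ℝ)+1) ^ (-(9/4):ℝ) := by rw [hdiv]
        _ ≤ K * ((j:ℝ)+1) ^ (-(9/4):ℝ) :=
            mul_le_mul_of_nonneg_right hKg (Real.rpow_nonneg (by linarith) _)


set_option maxHeartbeats 3000000 in
theorem statement16
    {Ω : Type*} [MeasurableSpace Ω] (P : Measure Ω) [IsProbabilityMeasure P]
    (c : ℤ → Ω → ℝ) (lam : ℝ) (hlam : 0 < lam)
    (hmeas : ∀ x, Measurable (c x)) (hpos : ∀ x ω, 0 < c x ω)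
    (hindep : iIndepFun c P)
    (hident : ∀ x, IdentDistrib (c x) (c 0) P P)
    (Linf L0 : ℝ → ℝ) (ainf a0 : ℝ) (hainf : 0 < ainf) (ha0 : 0 < a0)
    (halpha : min a0 ainf < 1)
    (hsvinf : SlowlyVarying Linf) (hsv0 : SlowlyVarying L0)
    (htailinf : ∀ t : ℝ, 1 < t → (P {ω | t < c 0 ω}).toReal = Linf t * t ^ (-ainf))
    (htail0 : ∀ ε : ℝ, 0 < ε → ε < 1 → (P {ω | c 0 ω < ε}).toReal = L0 (1 / ε) * ε ^ a0)
    (heqcase : a0 = ainf → ∃ (phiInf phi0 : ℝ → ℝ) (gInf g0 : ℝ),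
      SlowlyVarying phiInf ∧ SlowlyVarying phi0 ∧ gInf ≠ -1 ∧ g0 ≠ -1 ∧
      (∀ x : ℝ, 1 < x → Linf x = phiInf (Real.log x) * Real.log x ^ gInf) ∧
      (∀ x : ℝ, 1 < x → L0 x = phi0 (Real.log x) * Real.log x ^ g0))
    (hwawPos : ¬ Integrable (fun ω => c 0 ω ^ (min a0 ainf)) P)
    (hwawNeg : ¬ Integrable (fun ω => c 0 ω ^ (-(min a0 ainf))) P)
    (d : ℕ → ℝ) (hdpos : ∀ n : ℕ, 2 ≤ n → 0 < d n)
    (hd : Tendsto (fun n : ℕ => (n : ℝ) * (P {ω | d n < rho lam c 0 ω}).toReal)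
      atTop (nhds 1))
    (C : ℝ) (hC : 0 < C) :
    ∀ᵐ ω ∂P, {n : ℕ | 2 ≤ n ∧ ∃ x : ℤ, -(n : ℤ) ≤ x ∧ x ≤ (n : ℤ) ∧ ∃ k : ℕ,
      d n * Real.exp (-qseq n) < rhoK lam c x k ω ∧
      ∃ y : ℤ, x - 2 * (⌈C * Real.log n⌉₊ : ℤ) ≤ y ∧ y ≤ x + 2 * (⌈C * Real.log n⌉₊ : ℤ) ∧
        y ≠ x - 1 ∧ y ≠ x + (k : ℤ) ∧
        (c y ω < Real.exp (-4 * qseq n) ∨ Real.exp (4 * qseq n) < c y ω)}.Finite := by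
  classical
  set α : ℝ := min a0 ainf with hαdef
  have hαpos : 0 < α := lt_min ha0 hainf
  set ν : Measure ℝ := P.map (c 0) with hνdef
  haveI hνprob : IsProbabilityMeasure ν := Measure.isProbabilityMeasure_map (hmeas 0).aemeasurable
  -- tail structures
  have hνIoi : ∀ t : ℝ, ν (Set.Ioi t) = P {ω | t < c 0 ω} := by
    intro t
    rw [hνdef, Measure.map_apply (hmeas 0) measurableSet_Ioi]
    rfl
  have hνIio : ∀ t : ℝ, ν (Set.Iio t) = P {ω | c 0 ω < t} := by
    intro t
    rw [hνdef, Measure.map_apply (hmeas 0) measurableSet_Iio]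
    rfl
  have hgTF : TailFun (fun t => ν (Set.Ioi t)) Linf ainf := by
    refine ⟨?_, ?_, hsvinf, hainf, ?_⟩
    · intro s t hs hst
      exact measure_mono (Set.Ioi_subset_Ioi hst)
    · intro t ht
      rw [hνIoi t, ← ENNReal.ofReal_toReal (measure_ne_top P _), htailinf t ht]
    · intro t
      exact prob_le_one
  have hhTF : TailFun (fun t => ν (Set.Iio t⁻¹)) L0 a0 := by
    refine ⟨?_, ?_, hsv0, ha0, ?_⟩
    · intro s t hs hst
      apply measure_mono (Set.Iio_subset_Iio ?_)
      exact inv_anti₀ hs hst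
    · intro t ht
      have htpos : (0:ℝ) < t := by linarith
      rw [hνIio t⁻¹, ← ENNReal.ofReal_toReal (measure_ne_top P _),
        htail0 t⁻¹ (by positivity) (inv_lt_one_of_one_lt₀ ht)]
      congr 1
      rw [one_div, inv_inv, Real.inv_rpow htpos.le, Real.rpow_neg htpos.le]
    · intro t
      exact prob_le_one
  -- rhoK events in terms of psiFun
  have hpairlaw : ∀ (x : ℤ) (k : ℕ),
      Measure.map (fun ω => (c (x-1) ω, c (x + (k:ℤ)) ω)) P = ν.prod ν := by
    intro x k
    have hne : (x - 1) ≠ (x + (k:ℤ)) := by omega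
    have hIF : IndepFun (c (x-1)) (c (x + (k:ℤ))) P := hindep.indepFun hne
    rw [(indepFun_iff_map_prod_eq_prod_map_map (hmeas _).aemeasurable
        (hmeas _).aemeasurable).mp hIF,
      (hident (x-1)).map_eq, (hident (x + (k:ℤ))).map_eq]
  have hsetK : ∀ (u : ℝ) (x : ℤ) (k : ℕ), {ω | u < rhoK lam c x k ω} =
      (fun ω => (c (x-1) ω, c (x + (k:ℤ)) ω)) ⁻¹'
        {p : ℝ × ℝ | (u * Real.exp (lam * ((k:ℝ)+1))) * p.2 < p.1} := by
    intro u x k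
    ext ω
    simp only [Set.mem_setOf_eq, Set.mem_preimage, rhoK]
    rw [lt_div_iff₀ (hpos _ ω), show -lam * ((k:ℝ)+1) = -(lam * ((k:ℝ)+1)) by ring,
      Real.exp_neg, inv_mul_eq_div, lt_div_iff₀ (Real.exp_pos _), mul_right_comm]
  have hrhoK : ∀ (u : ℝ) (x : ℤ) (k : ℕ),
      P {ω | u < rhoK lam c x k ω} = psiFun ν (u * Real.exp (lam * ((k:ℝ)+1))) := by
    intro u x k
    rw [hsetK u x k, ← Measure.map_apply ((hmeas _).prodMk (hmeas _)) (psiSet_meas _),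
      hpairlaw x k]
    rfl
  have hrho0 : ∀ u : ℝ, P {ω | u < rho lam c 0 ω} = psiFun ν (u * Real.exp lam) := by
    intro u
    have heq : ∀ ω : Ω, rho lam c 0 ω = rhoK lam c 0 0 ω := by
      intro ω
      simp only [rho, rhoK]
      norm_num
    have hseteq : {ω | u < rho lam c 0 ω} = {ω | u < rhoK lam c 0 0 ω} := by
      ext ω
      simp only [Set.mem_setOf_eq, heq ω]
    rw [hseteq, hrhoK u 0 0]
    norm_num
  -- Q1 with exponent 5α/4
  obtain ⟨CA, hCAtop, hCA1, hQ1⟩ : ∃ CA : ℝ≥0∞, CA ≠ ⊤ ∧ 1 ≤ CA ∧ ∀ t s : ℝ, 0 < t → 1 ≤ s →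
      psiFun ν (t/s) ≤ CA * ENNReal.ofReal (s ^ (5*α/4)) * psiFun ν t := by
    rcases le_total a0 ainf with hle | hle
    · obtain ⟨C', hCtop, hC1, hC⟩ := psi_ratio_down_H hhTF
        (show (0:ℝ) < a0/4 by positivity)
      refine ⟨C', hCtop, hC1, ?_⟩
      intro t s ht hs
      have hα : α = a0 := min_eq_left hle
      have hexp : a0 + a0/4 = 5*α/4 := by rw [hα]; ring
      have hres := hC t s ht hs
      rwa [hexp] at hres
    · obtain ⟨C', hCtop, hC1, hC⟩ := psi_ratio_down_G hgTF
        (show (0:ℝ) < ainf/4 by positivity)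
      refine ⟨C', hCtop, hC1, ?_⟩
      intro t s ht hs
      have hα : α = ainf := min_eq_right hle
      have hexp : ainf + ainf/4 = 5*α/4 := by rw [hα]; ring
      have hres := hC t s ht hs
      rwa [hexp] at hres
  -- Q2
  obtain ⟨CB, hCBtop, TB, hTB2, hQ2⟩ : ∃ CB : ℝ≥0∞, CB ≠ ⊤ ∧ ∃ TB : ℝ, 2 < TB ∧
      ∀ t s : ℝ, TB ≤ t → 1 ≤ s →
        psiFun ν (t * s) ≤ CB * ENNReal.ofReal (s ^ (-(α/4))) * psiFun ν t := by
    obtain ⟨C', hCtop, T', hT2, hC⟩ := psi_ratio_up hgTF hhTF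
    refine ⟨C', hCtop, T', hT2, ?_⟩
    intro t s ht hs
    have hmm : min ainf a0 / 4 = α/4 := by rw [hαdef, min_comm]
    have hres := hC t s ht hs
    rwa [hmm] at hres
  -- poly tails
  obtain ⟨CG, hCGtop, TG, hTG, hGpoly⟩ := hgTF.poly_up (half_pos hainf) (half_lt_self hainf)
  obtain ⟨CH, hCHtop, TH, hTH, hHpoly⟩ := hhTF.poly_up (half_pos ha0) (half_lt_self ha0)
  -- eventual bound from hd
  have hdev : ∀ᶠ n : ℕ in atTop, psiFun ν (d n * Real.exp lam) ≤ ENNReal.ofReal (2 / (n:ℝ)) := by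
    have h1 : ∀ᶠ n : ℕ in atTop, (n:ℝ) * (P {ω | d n < rho lam c 0 ω}).toReal ≤ 2 :=
      hd.eventually (eventually_le_nhds one_lt_two)
    filter_upwards [h1, eventually_ge_atTop 1] with n hn hn1
    have hnpos : (0:ℝ) < n := by exact_mod_cast hn1
    rw [← hrho0 (d n), ← ENNReal.ofReal_toReal (measure_ne_top P _)]
    apply ENNReal.ofReal_le_ofReal
    rw [le_div_iff₀ hnpos]
    linarith [mul_comm ((P {ω | d n < rho lam c 0 ω}).toReal) (n:ℝ)]
  have hdbig : ∀ᶠ n : ℕ in atTop, TB ≤ d n * Real.exp lam := by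
    have hTBpos : (0:ℝ) < TB := by linarith
    set δ : ℝ≥0∞ := ν (Set.Ioi 1) * ν (Set.Iio TB⁻¹) with hδdef
    have hδpos : 0 < δ :=
      ENNReal.mul_pos (hgTF.kpos one_pos).ne' (hhTF.kpos hTBpos).ne'
    have hδtop : δ ≠ ⊤ :=
      ENNReal.mul_ne_top (lt_of_le_of_lt prob_le_one (by norm_num)).ne
        (lt_of_le_of_lt prob_le_one (by norm_num)).ne
    have hψlow : ∀ t : ℝ, 0 < t → t ≤ TB → δ ≤ psiFun ν t := by
      intro t ht htTB
      calc δ = ν (Set.Ioi 1) * ν (Set.Iio TB⁻¹) := rfl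
        _ ≤ ν (Set.Ioi 1) * ν (Set.Iio t⁻¹) := by
            apply mul_le_mul_right
            apply measure_mono
            apply Set.Iio_subset_Iio
            exact inv_anti₀ ht htTB
        _ ≤ psiFun ν t := psiFun_lower ht
    have h2 : Tendsto (fun n : ℕ => 2/(n:ℝ)) atTop (nhds 0) :=
      tendsto_const_div_atTop_nhds_zero_nat 2
    have h3 : ∀ᶠ n : ℕ in atTop, 2/(n:ℝ) < δ.toReal :=
      h2.eventually (eventually_lt_nhds (ENNReal.toReal_pos hδpos.ne' hδtop))
    filter_upwards [hdev, h3, eventually_ge_atTop 2] with n hn1 hn2 hn3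
    by_contra hlt
    push_neg at hlt
    have hdn : 0 < d n * Real.exp lam := by
      have := hdpos n hn3
      positivity
    have h4 : δ ≤ ENNReal.ofReal (2/(n:ℝ)) := le_trans (hψlow _ hdn hlt.le) hn1
    have h5 : δ.toReal ≤ 2/(n:ℝ) := by
      calc δ.toReal ≤ (ENNReal.ofReal (2/(n:ℝ))).toReal :=
            ENNReal.toReal_mono ENNReal.ofReal_ne_top h4
        _ = 2/(n:ℝ) := ENNReal.toReal_ofReal (by positivity)
    linarith
  -- block quantities
  have hblockne : ∀ j : ℕ, ((Finset.Ico (2^j) (2^(j+1))).image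
      (fun n => d n * Real.exp (-qseq n))).Nonempty := by
    intro j
    apply Finset.Nonempty.image
    refine Finset.nonempty_Ico.mpr ?_
    exact Nat.pow_lt_pow_right one_lt_two (Nat.lt_succ_self j)
  set u : ℕ → ℝ := fun j => ((Finset.Ico (2^j) (2^(j+1))).image
      (fun n => d n * Real.exp (-qseq n))).min' (hblockne j) with hudef
  have hule : ∀ j : ℕ, ∀ n ∈ Finset.Ico (2^j) (2^(j+1)), u j ≤ d n * Real.exp (-qseq n) := by
    intro j n hn
    apply Finset.min'_le
    exact Finset.mem_image_of_mem _ hn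
  have humem : ∀ j : ℕ, ∃ m ∈ Finset.Ico (2^j) (2^(j+1)), u j = d m * Real.exp (-qseq m) := by
    intro j
    have := Finset.min'_mem _ (hblockne j)
    rw [Finset.mem_image] at this
    obtain ⟨m, hm, hmeq⟩ := this
    exact ⟨m, hm, hmeq.symm⟩
  set W : ℕ → ℤ := fun j => ((⌈C * Real.log ((2^(j+1) : ℕ) : ℝ)⌉₊ : ℕ) : ℤ) with hWdef
  set Q : ℕ → ℝ := fun j => qseq (2^j) with hQdef
  set Ext : ℕ → Set ℝ := fun j =>
    Set.Iio (Real.exp (-4 * Q j)) ∪ Set.Ioi (Real.exp (4 * Q j)) with hExtdef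
  set ExtM : ℕ → ℝ≥0∞ := fun j =>
    ν (Set.Iio (Real.exp (-4 * Q j))) + ν (Set.Ioi (Real.exp (4 * Q j))) with hExtMdef
  set H : ℕ → Set Ω := fun j =>
    ⋃ x ∈ Finset.Icc (-(2:ℤ)^(j+1)) ((2:ℤ)^(j+1)), ⋃ k : ℕ,
      ⋃ y ∈ Finset.Icc (x - 2 * W j) (x + 2 * W j),
        ({ω | u j < rhoK lam c x k ω} ∩ (c y) ⁻¹' (Ext j) ∩
          {ω | y ≠ x - 1 ∧ y ≠ x + (k:ℤ)}) with hHdef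
  -- per-term bound
  have hExtmeas : ∀ j, MeasurableSet (Ext j) := fun j =>
    measurableSet_Iio.union measurableSet_Ioi
  have hterm : ∀ (j:ℕ) (x:ℤ) (k:ℕ) (y:ℤ),
      P ({ω | u j < rhoK lam c x k ω} ∩ (c y) ⁻¹' (Ext j) ∩
          {ω | y ≠ x - 1 ∧ y ≠ x + (k:ℤ)})
        ≤ psiFun ν (u j * Real.exp (lam * ((k:ℝ)+1))) * ExtM j := by
    intro j x k y
    by_cases hy : y ≠ x - 1 ∧ y ≠ x + (k:ℤ)
    · have hset1 : {ω : Ω | y ≠ x - 1 ∧ y ≠ x + (k:ℤ)} = Set.univ := by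
        ext ω
        simp [hy.1, hy.2]
      rw [hset1, Set.inter_univ, hsetK (u j) x k]
      have hIF : IndepFun (fun ω => (c (x-1) ω, c (x + (k:ℤ)) ω)) (c y) P :=
        hindep.indepFun_prodMk hmeas (x-1) (x + (k:ℤ)) y
          (fun h => hy.1 h.symm) (fun h => hy.2 h.symm)
      rw [hIF.measure_inter_preimage_eq_mul _ _ (psiSet_meas _) (hExtmeas j)]
      apply mul_le_mul'
      · apply le_of_eq
        rw [← hsetK (u j) x k, hrhoK]
      · rw [← Measure.map_apply (hmeas y) (hExtmeas j), (hident y).map_eq]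
        exact measure_union_le _ _
    · have hset1 : {ω : Ω | y ≠ x - 1 ∧ y ≠ x + (k:ℤ)} = ∅ := by
        ext ω
        simp only [Set.mem_setOf_eq, Set.mem_empty_iff_false, iff_false]
        exact hy
      rw [hset1, Set.inter_empty]
      simp
  -- union bound
  have hHle : ∀ j : ℕ, P (H j) ≤
      ((Finset.Icc (-(2:ℤ)^(j+1)) ((2:ℤ)^(j+1))).card : ℝ≥0∞) *
        (((Finset.Icc (-(2 * W j)) (2 * W j)).card : ℝ≥0∞) *
          ((∑' k : ℕ, psiFun ν (u j * Real.exp (lam * ((k:ℝ)+1)))) * ExtM j)) := by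
    intro j
    have hcardy : ∀ x : ℤ, ((Finset.Icc (x - 2*W j) (x + 2*W j)).card : ℝ≥0∞) =
        ((Finset.Icc (-(2*W j)) (2*W j)).card : ℝ≥0∞) := by
      intro x
      congr 1
      rw [Int.card_Icc, Int.card_Icc]
      congr 1
      ring
    calc P (H j) ≤ ∑ x ∈ Finset.Icc (-(2:ℤ)^(j+1)) ((2:ℤ)^(j+1)),
        ∑' k : ℕ, ∑ y ∈ Finset.Icc (x - 2*W j) (x + 2*W j),
          P ({ω | u j < rhoK lam c x k ω} ∩ (c y) ⁻¹' (Ext j) ∩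
            {ω | y ≠ x - 1 ∧ y ≠ x + (k:ℤ)}) := by
          rw [hHdef]
          refine le_trans (measure_biUnion_finset_le _ _) (Finset.sum_le_sum ?_)
          intro x _
          refine le_trans (measure_iUnion_le _) (ENNReal.tsum_le_tsum ?_)
          intro k
          exact measure_biUnion_finset_le _ _
      _ ≤ ∑ x ∈ Finset.Icc (-(2:ℤ)^(j+1)) ((2:ℤ)^(j+1)),
          ∑' k : ℕ, ∑ _y ∈ Finset.Icc (x - 2*W j) (x + 2*W j),
            psiFun ν (u j * Real.exp (lam * ((k:ℝ)+1))) * ExtM j :=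
          Finset.sum_le_sum fun x _ => ENNReal.tsum_le_tsum fun k =>
            Finset.sum_le_sum fun y _ => hterm j x k y
      _ = ∑ x ∈ Finset.Icc (-(2:ℤ)^(j+1)) ((2:ℤ)^(j+1)),
          (((Finset.Icc (-(2 * W j)) (2 * W j)).card : ℝ≥0∞) *
            ((∑' k : ℕ, psiFun ν (u j * Real.exp (lam * ((k:ℝ)+1)))) * ExtM j)) := by
          apply Finset.sum_congr rfl
          intro x _
          have h1 : ∀ k : ℕ, ∑ _y ∈ Finset.Icc (x - 2*W j) (x + 2*W j),
              psiFun ν (u j * Real.exp (lam * ((k:ℝ)+1))) * ExtM j =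
              ((Finset.Icc (-(2 * W j)) (2 * W j)).card : ℝ≥0∞) *
                (psiFun ν (u j * Real.exp (lam * ((k:ℝ)+1))) * ExtM j) := by
            intro k
            rw [Finset.sum_const, nsmul_eq_mul, hcardy x]
          rw [tsum_congr h1, ENNReal.tsum_mul_left, ENNReal.tsum_mul_right]
      _ = ((Finset.Icc (-(2:ℤ)^(j+1)) ((2:ℤ)^(j+1))).card : ℝ≥0∞) *
          (((Finset.Icc (-(2 * W j)) (2 * W j)).card : ℝ≥0∞) *
            ((∑' k : ℕ, psiFun ν (u j * Real.exp (lam * ((k:ℝ)+1)))) * ExtM j)) := by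
          rw [Finset.sum_const, nsmul_eq_mul]
  -- the k-sum bound (for good j)
  set S₀ : ℝ≥0∞ := (1 - ENNReal.ofReal (Real.exp (-(α/4 * lam))))⁻¹ with hS₀def
  have hS₀top : S₀ ≠ ⊤ := by
    rw [hS₀def]
    apply ENNReal.inv_ne_top.mpr
    intro h
    rw [tsub_eq_zero_iff_le] at h
    have hlt : ENNReal.ofReal (Real.exp (-(α/4 * lam))) < 1 := by
      rw [← ENNReal.ofReal_one]
      apply (ENNReal.ofReal_lt_ofReal_iff (by norm_num)).mpr
      rw [Real.exp_lt_one_iff]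
      nlinarith
    exact absurd h (not_le.mpr hlt)
  have hrp : ∀ y cx : ℝ, Real.exp y ^ cx = Real.exp (y * cx) := by
    intro y cx
    rw [Real.rpow_def_of_pos (Real.exp_pos y), Real.log_exp]
  have hqmono : ∀ a b : ℕ, 1 ≤ a → a ≤ b → qseq a ≤ qseq b := by
    intro a b ha hab
    apply Real.rpow_le_rpow (Real.log_nonneg (by exact_mod_cast ha))
      (Real.log_le_log (by exact_mod_cast Nat.lt_of_lt_of_le Nat.zero_lt_one ha)
        (by exact_mod_cast hab)) (by norm_num)
  have hqnonneg : ∀ a : ℕ, 1 ≤ a → 0 ≤ qseq a := by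
    intro a ha
    exact Real.rpow_nonneg (Real.log_nonneg (by exact_mod_cast ha)) _
  have hsumk : ∀ j : ℕ, 1 ≤ j →
      (∀ m : ℕ, 2^j ≤ m → psiFun ν (d m * Real.exp lam) ≤ ENNReal.ofReal (2 / (m:ℝ)) ∧
        TB ≤ d m * Real.exp lam) →
      (∑' k : ℕ, psiFun ν (u j * Real.exp (lam * ((k:ℝ)+1))))
        ≤ (CA * CB * S₀) * ENNReal.ofReal (Real.exp (5*α/4 * qseq (2^(j+1))) * (2 / (2:ℝ)^j)) := by
    intro j hj1 hblock
    obtain ⟨m, hm, hmeq⟩ := humem j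
    rw [Finset.mem_Ico] at hm
    have hm2 : 2 ≤ m := by
      calc 2 = 2^1 := (pow_one 2).symm
        _ ≤ 2^j := Nat.pow_le_pow_right (by norm_num) hj1
        _ ≤ m := hm.1
    have hm1 : 1 ≤ m := by omega
    have hdm : 0 < d m := hdpos m hm2
    have hq0 : 0 ≤ qseq m := hqnonneg m hm1
    have hs1 : (1:ℝ) ≤ Real.exp (qseq m) := by
      rw [← Real.exp_zero]
      exact Real.exp_le_exp.mpr hq0
    obtain ⟨hψm, hTBm⟩ := hblock m hm.1
    have hk : ∀ k : ℕ, psiFun ν (u j * Real.exp (lam * ((k:ℝ)+1))) ≤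
        ((CA * CB) * (ENNReal.ofReal (Real.exp (qseq m) ^ (5*α/4)) *
          ENNReal.ofReal (2/(m:ℝ)))) * ENNReal.ofReal (Real.exp (lam*(k:ℝ)) ^ (-(α/4))) := by
      intro k
      have harg : u j * Real.exp (lam*((k:ℝ)+1)) =
          (d m * Real.exp lam * Real.exp (lam*(k:ℝ))) / Real.exp (qseq m) := by
        rw [hmeq, show lam*((k:ℝ)+1) = lam + lam*(k:ℝ) by ring, Real.exp_add, Real.exp_neg]
        field_simp
      have htpos : 0 < d m * Real.exp lam * Real.exp (lam*(k:ℝ)) := by positivity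
      have h1 := hQ1 (d m * Real.exp lam * Real.exp (lam*(k:ℝ))) (Real.exp (qseq m))
        htpos hs1
      rw [← harg] at h1
      have hsk1 : (1:ℝ) ≤ Real.exp (lam*(k:ℝ)) := by
        rw [← Real.exp_zero]
        exact Real.exp_le_exp.mpr (by positivity)
      have h2 := hQ2 (d m * Real.exp lam) (Real.exp (lam*(k:ℝ))) hTBm hsk1
      calc psiFun ν (u j * Real.exp (lam * ((k:ℝ)+1)))
          ≤ CA * ENNReal.ofReal (Real.exp (qseq m) ^ (5*α/4)) *
            psiFun ν (d m * Real.exp lam * Real.exp (lam*(k:ℝ))) := h1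
        _ ≤ CA * ENNReal.ofReal (Real.exp (qseq m) ^ (5*α/4)) *
            (CB * ENNReal.ofReal (Real.exp (lam*(k:ℝ)) ^ (-(α/4))) *
              psiFun ν (d m * Real.exp lam)) := mul_le_mul_right h2 _
        _ ≤ CA * ENNReal.ofReal (Real.exp (qseq m) ^ (5*α/4)) *
            (CB * ENNReal.ofReal (Real.exp (lam*(k:ℝ)) ^ (-(α/4))) *
              ENNReal.ofReal (2/(m:ℝ))) :=
            mul_le_mul_right (mul_le_mul_right hψm _) _
        _ = ((CA * CB) * (ENNReal.ofReal (Real.exp (qseq m) ^ (5*α/4)) *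
              ENNReal.ofReal (2/(m:ℝ)))) *
            ENNReal.ofReal (Real.exp (lam*(k:ℝ)) ^ (-(α/4))) := by ring
    have hgk : ∀ k : ℕ, ENNReal.ofReal (Real.exp (lam*(k:ℝ)) ^ (-(α/4))) =
        (ENNReal.ofReal (Real.exp (-(α/4 * lam))))^k := by
      intro k
      rw [← ENNReal.ofReal_pow (Real.exp_pos _).le]
      congr 1
      rw [hrp, ← Real.exp_nat_mul]
      congr 1
      ring
    have hgeo : (∑' k : ℕ, ENNReal.ofReal (Real.exp (lam*(k:ℝ)) ^ (-(α/4)))) = S₀ := by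
      rw [tsum_congr hgk, ENNReal.tsum_geometric]
    calc (∑' k : ℕ, psiFun ν (u j * Real.exp (lam * ((k:ℝ)+1))))
        ≤ ∑' k : ℕ, ((CA * CB) * (ENNReal.ofReal (Real.exp (qseq m) ^ (5*α/4)) *
            ENNReal.ofReal (2/(m:ℝ)))) *
          ENNReal.ofReal (Real.exp (lam*(k:ℝ)) ^ (-(α/4))) := ENNReal.tsum_le_tsum hk
      _ = ((CA * CB) * (ENNReal.ofReal (Real.exp (qseq m) ^ (5*α/4)) *
            ENNReal.ofReal (2/(m:ℝ)))) * S₀ := by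
          rw [ENNReal.tsum_mul_left, hgeo]
      _ = (CA * CB * S₀) * (ENNReal.ofReal (Real.exp (qseq m) ^ (5*α/4)) *
            ENNReal.ofReal (2/(m:ℝ))) := by ring
      _ ≤ (CA * CB * S₀) * ENNReal.ofReal (Real.exp (5*α/4 * qseq (2^(j+1))) * (2 / (2:ℝ)^j)) := by
          apply mul_le_mul_right
          rw [← ENNReal.ofReal_mul (Real.rpow_nonneg (Real.exp_pos _).le _)]
          apply ENNReal.ofReal_le_ofReal
          apply mul_le_mul
          · rw [hrp]
            apply Real.exp_le_exp.mpr
            have hq2 : qseq m ≤ qseq (2^(j+1)) := hqmono m (2^(j+1)) hm1 (le_of_lt hm.2)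
            nlinarith [hqnonneg (2^(j+1)) (Nat.one_le_two_pow)]
          · have hcast : ((2:ℝ)^j) ≤ (m:ℝ) := by
              have := hm.1
              push_cast
              exact_mod_cast this
            apply div_le_div_of_nonneg_left (by norm_num) (by positivity) hcast
          · positivity
          · positivity
  have hExtMle : ∀ j : ℕ, TG ≤ Real.exp (4 * Q j) → TH ≤ Real.exp (4 * Q j) →
      ExtM j ≤ (CG + CH) * ENNReal.ofReal (Real.exp (-(2*α) * Q j)) := by
    intro j hjG hjH
    have hQ0 : 0 ≤ Q j := hqnonneg (2^j) (Nat.one_le_two_pow)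
    have hb1 : ν (Set.Ioi (Real.exp (4 * Q j))) ≤
        CG * ENNReal.ofReal (Real.exp (-(2*α) * Q j)) := by
      have h1 := hGpoly (Real.exp (4 * Q j)) hjG
      calc ν (Set.Ioi (Real.exp (4 * Q j)))
          ≤ CG * ENNReal.ofReal (Real.exp (4 * Q j) ^ (ainf/2 - ainf)) := h1
        _ ≤ CG * ENNReal.ofReal (Real.exp (-(2*α) * Q j)) := by
            apply mul_le_mul_right
            apply ENNReal.ofReal_le_ofReal
            rw [hrp]
            apply Real.exp_le_exp.mpr
            have hαa : α ≤ ainf := min_le_right _ _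
            nlinarith
    have hb2 : ν (Set.Iio (Real.exp (-4 * Q j))) ≤
        CH * ENNReal.ofReal (Real.exp (-(2*α) * Q j)) := by
      have hset : Set.Iio (Real.exp (-4 * Q j)) = Set.Iio ((Real.exp (4 * Q j))⁻¹) := by
        congr 1
        rw [← Real.exp_neg]
        congr 1
        ring
      have h1 := hHpoly (Real.exp (4 * Q j)) hjH
      calc ν (Set.Iio (Real.exp (-4 * Q j))) = ν (Set.Iio ((Real.exp (4 * Q j))⁻¹)) := by
            rw [hset]
        _ ≤ CH * ENNReal.ofReal (Real.exp (4 * Q j) ^ (a0/2 - a0)) := h1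
        _ ≤ CH * ENNReal.ofReal (Real.exp (-(2*α) * Q j)) := by
            apply mul_le_mul_right
            apply ENNReal.ofReal_le_ofReal
            rw [hrp]
            apply Real.exp_le_exp.mpr
            have hαa : α ≤ a0 := min_le_left _ _
            nlinarith
    calc ExtM j = ν (Set.Iio (Real.exp (-4 * Q j))) + ν (Set.Ioi (Real.exp (4 * Q j))) := rfl
      _ ≤ CH * ENNReal.ofReal (Real.exp (-(2*α) * Q j)) +
          CG * ENNReal.ofReal (Real.exp (-(2*α) * Q j)) := add_le_add hb2 hb1
      _ = (CG + CH) * ENNReal.ofReal (Real.exp (-(2*α) * Q j)) := by ring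
  -- summable bound
  have hQval : ∀ j : ℕ, Q j = ((j:ℝ) * Real.log 2) ^ ((1:ℝ)/4) := by
    intro j
    simp only [hQdef, qseq]
    congr 1
    rw [Nat.cast_pow, Real.log_pow]
    push_cast
    ring
  have hQval' : ∀ j : ℕ, qseq (2^(j+1)) = (((j:ℝ)+1) * Real.log 2) ^ ((1:ℝ)/4) := by
    intro j
    simp only [qseq]
    congr 1
    rw [Nat.cast_pow, Real.log_pow]
    push_cast
    ring
  have hlog2 : (0:ℝ) < Real.log 2 := Real.log_pos (by norm_num)
  have hQtend : Tendsto Q atTop atTop := by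
    have h1 : Tendsto (fun j : ℕ => (j:ℝ) * Real.log 2) atTop atTop :=
      Tendsto.atTop_mul_const hlog2 tendsto_natCast_atTop_atTop
    have h2 := (tendsto_rpow_atTop (by norm_num : (0:ℝ) < 1/4)).comp h1
    apply h2.congr
    intro j
    exact (hQval j).symm
  have hTGpos : (0:ℝ) < TG := by linarith
  have hTHpos : (0:ℝ) < TH := by linarith
  have hEventG : ∀ᶠ j : ℕ in atTop, TG ≤ Real.exp (4 * Q j) ∧ TH ≤ Real.exp (4 * Q j) := by
    filter_upwards [hQtend.eventually_ge_atTop (max (Real.log TG) (Real.log TH) / 4)]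
      with j hj
    constructor
    · rw [← Real.exp_log hTGpos]
      apply Real.exp_le_exp.mpr
      have := le_max_left (Real.log TG) (Real.log TH)
      linarith
    · rw [← Real.exp_log hTHpos]
      apply Real.exp_le_exp.mpr
      have := le_max_right (Real.log TG) (Real.log TH)
      linarith
  have hblockev : ∀ᶠ j : ℕ in atTop, ∀ m : ℕ, 2^j ≤ m →
      psiFun ν (d m * Real.exp lam) ≤ ENNReal.ofReal (2 / (m:ℝ)) ∧
        TB ≤ d m * Real.exp lam := by
    rw [eventually_atTop] at hdev hdbig
    obtain ⟨N₁, hN₁⟩ := hdev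
    obtain ⟨N₂, hN₂⟩ := hdbig
    filter_upwards [eventually_ge_atTop (max N₁ N₂)] with j hj
    intro m hm
    have hmj : j ≤ m := le_trans (Nat.le_of_lt (Nat.lt_two_pow_self (n := j))) hm
    exact ⟨hN₁ m (le_trans (le_trans (le_max_left _ _) hj) hmj),
      hN₂ m (le_trans (le_trans (le_max_right _ _) hj) hmj)⟩
  set cc : ℝ := α/2 * (Real.log 2) ^ ((1:ℝ)/4) with hccdef
  have hccpos : 0 < cc := by
    have := Real.rpow_pos_of_pos hlog2 ((1:ℝ)/4)
    positivity
  set c₅ : ℝ := 4*C*Real.log 2 + 5 with hc₅def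
  have hc₅pos : 0 < c₅ := by positivity
  set Dfull : ℝ≥0∞ := (CA * CB * S₀) * (CG + CH) with hDdef
  have hDtop : Dfull ≠ ⊤ :=
    ENNReal.mul_ne_top (ENNReal.mul_ne_top (ENNReal.mul_ne_top hCAtop hCBtop) hS₀top)
      (ENNReal.add_ne_top.mpr ⟨hCGtop, hCHtop⟩)
  have h2quarter : (2:ℝ) ^ ((1:ℝ)/4) ≤ 6/5 := by
    have h1 : ((2:ℝ) ^ ((1:ℝ)/4)) ^ (4:ℕ) = 2 := by
      rw [← Real.rpow_natCast ((2:ℝ) ^ ((1:ℝ)/4)) 4, ← Real.rpow_mul (by norm_num)]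
      norm_num
    have h2 : ((2:ℝ) ^ ((1:ℝ)/4)) ^ (4:ℕ) ≤ (6/5:ℝ) ^ (4:ℕ) := by
      rw [h1]
      norm_num
    exact le_of_pow_le_pow_left₀ (by norm_num) (by norm_num) h2
  have hexple : ∀ j : ℕ, 1 ≤ j →
      5*α/4 * qseq (2^(j+1)) + (-(2*α) * Q j) ≤ -(cc * (j:ℝ) ^ ((1:ℝ)/4)) := by
    intro j hj1
    have hj1R : (1:ℝ) ≤ (j:ℝ) := by exact_mod_cast hj1
    set X : ℝ := ((j:ℝ) * Real.log 2) ^ ((1:ℝ)/4) with hXd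
    have hX0 : 0 ≤ X := Real.rpow_nonneg (by positivity) _
    have hQX : Q j = X := hQval j
    have hYle : qseq (2^(j+1)) ≤ (2:ℝ) ^ ((1:ℝ)/4) * X := by
      rw [hQval' j]
      have h1 : ((j:ℝ)+1) * Real.log 2 ≤ 2 * ((j:ℝ) * Real.log 2) := by nlinarith
      calc (((j:ℝ)+1) * Real.log 2) ^ ((1:ℝ)/4)
          ≤ (2 * ((j:ℝ) * Real.log 2)) ^ ((1:ℝ)/4) :=
            Real.rpow_le_rpow (by positivity) h1 (by norm_num)
        _ = (2:ℝ) ^ ((1:ℝ)/4) * X := Real.mul_rpow (by norm_num) (by positivity)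
    have hccX : cc * (j:ℝ) ^ ((1:ℝ)/4) = α/2 * X := by
      rw [hccdef, hXd, Real.mul_rpow (by positivity) hlog2.le]
      ring
    rw [hQX, hccX]
    have h5 : 5*α/4 * qseq (2^(j+1)) ≤ 5*α/4 * ((2:ℝ) ^ ((1:ℝ)/4) * X) := by
      apply mul_le_mul_of_nonneg_left hYle (by positivity)
    have h6 : 5*α/4 * ((2:ℝ) ^ ((1:ℝ)/4) * X) ≤ 3/2 * α * X := by
      have h7 : (0:ℝ) ≤ α * X := by positivity
      nlinarith [h2quarter, h7]
    have h8 := h5.trans h6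
    linarith
  have hgood : ∀ j : ℕ, 1 ≤ j →
      (∀ m : ℕ, 2^j ≤ m → psiFun ν (d m * Real.exp lam) ≤ ENNReal.ofReal (2 / (m:ℝ)) ∧
        TB ≤ d m * Real.exp lam) →
      TG ≤ Real.exp (4 * Q j) → TH ≤ Real.exp (4 * Q j) →
      P (H j) ≤ Dfull * ENNReal.ofReal ((16*c₅) *
        (((j:ℝ)+1) * Real.exp (-(cc * (j:ℝ) ^ ((1:ℝ)/4))))) := by
    intro j hj1 hblock hjG hjH
    have hcardx : ((Finset.Icc (-(2:ℤ)^(j+1)) ((2:ℤ)^(j+1))).card : ℝ≥0∞) ≤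
        ENNReal.ofReal ((2:ℝ)^(j+2) + 1) := by
      have h1 : (Finset.Icc (-(2:ℤ)^(j+1)) ((2:ℤ)^(j+1))).card = 2^(j+2)+1 := by
        rw [Int.card_Icc]
        have h2 : (2:ℤ)^(j+1) + 1 - -(2:ℤ)^(j+1) = ((2^(j+2)+1 : ℕ) : ℤ) := by
          push_cast
          ring
        rw [h2, Int.toNat_natCast]
      rw [h1, ← ENNReal.ofReal_natCast]
      apply ENNReal.ofReal_le_ofReal
      push_cast
      exact le_rfl
    have hcy : ((Finset.Icc (-(2*W j)) (2*W j)).card : ℝ≥0∞) ≤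
        ENNReal.ofReal (c₅ * ((j:ℝ)+1)) := by
      have h1 : (Finset.Icc (-(2*W j)) (2*W j)).card =
          4 * ⌈C * Real.log ((2^(j+1):ℕ):ℝ)⌉₊ + 1 := by
        rw [Int.card_Icc]
        have h2 : 2*W j + 1 - -(2*W j) =
            ((4 * ⌈C * Real.log ((2^(j+1):ℕ):ℝ)⌉₊ + 1 : ℕ) : ℤ) := by
          simp only [hWdef]
          push_cast
          ring
        rw [h2, Int.toNat_natCast]
      rw [h1, ← ENNReal.ofReal_natCast]
      apply ENNReal.ofReal_le_ofReal
      have hlogn : (0:ℝ) ≤ Real.log ((2^(j+1):ℕ):ℝ) := by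
        apply Real.log_nonneg
        exact_mod_cast Nat.one_le_two_pow
      have hceil : (⌈C * Real.log ((2^(j+1):ℕ):ℝ)⌉₊ : ℝ) <
          C * Real.log ((2^(j+1):ℕ):ℝ) + 1 :=
        Nat.ceil_lt_add_one (mul_nonneg hC.le hlogn)
      have hlogval : Real.log ((2^(j+1):ℕ):ℝ) = ((j:ℝ)+1) * Real.log 2 := by
        rw [Nat.cast_pow, Real.log_pow]
        push_cast
        ring
      rw [hlogval] at hceil
      have hj0 : (0:ℝ) ≤ (j:ℝ) := Nat.cast_nonneg j
      rw [hlogval]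
      push_cast
      rw [hc₅def]
      nlinarith [hlog2, hC, hceil]
    refine le_trans (hHle j) ?_
    have hsum := hsumk j hj1 hblock
    have hext := hExtMle j hjG hjH
    have h2jpos : (0:ℝ) < (2:ℝ)^j := by positivity
    have hq5 : (0:ℝ) ≤ Real.exp (5*α/4 * qseq (2^(j+1))) * (2/(2:ℝ)^j) := by positivity
    have hA0 : (0:ℝ) ≤ (2:ℝ)^(j+2)+1 := by positivity
    have hB0 : (0:ℝ) ≤ c₅ * ((j:ℝ)+1) := by positivity
    have hreal : ((2:ℝ)^(j+2)+1) * (c₅*((j:ℝ)+1)) *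
        (Real.exp (5*α/4 * qseq (2^(j+1))) * (2/(2:ℝ)^j)) * Real.exp (-(2*α) * Q j)
        ≤ (16*c₅) * (((j:ℝ)+1) * Real.exp (-(cc * (j:ℝ) ^ ((1:ℝ)/4)))) := by
      have hkey : ((2:ℝ)^(j+2)+1) * (c₅*((j:ℝ)+1)) *
          (Real.exp (5*α/4 * qseq (2^(j+1))) * (2/(2:ℝ)^j)) * Real.exp (-(2*α) * Q j)
          = (((2:ℝ)^(j+2)+1) * (2/(2:ℝ)^j)) * ((c₅*((j:ℝ)+1)) *
            (Real.exp (5*α/4 * qseq (2^(j+1))) * Real.exp (-(2*α) * Q j))) := by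
        ring
      rw [hkey, ← Real.exp_add]
      have h16 : ((2:ℝ)^(j+2)+1) * (2/(2:ℝ)^j) ≤ 16 := by
        have h2j1 : (1:ℝ) ≤ (2:ℝ)^j := one_le_pow₀ (by norm_num)
        have heq : ((2:ℝ)^(j+2)+1) * (2/(2:ℝ)^j) = ((2:ℝ)^(j+2)*2+2)/(2:ℝ)^j := by
          field_simp
        rw [heq, div_le_iff₀ h2jpos]
        have hp : (2:ℝ)^(j+2) = 2^j * 4 := by rw [pow_add]; norm_num
        nlinarith [h2j1]
      have hee : Real.exp (5*α/4 * qseq (2^(j+1)) + -(2*α) * Q j) ≤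
          Real.exp (-(cc * (j:ℝ) ^ ((1:ℝ)/4))) :=
        Real.exp_le_exp.mpr (hexple j hj1)
      calc (((2:ℝ)^(j+2)+1) * (2/(2:ℝ)^j)) * ((c₅*((j:ℝ)+1)) *
            Real.exp (5*α/4 * qseq (2^(j+1)) + -(2*α) * Q j))
          ≤ 16 * ((c₅*((j:ℝ)+1)) * Real.exp (-(cc * (j:ℝ) ^ ((1:ℝ)/4)))) := by
            apply mul_le_mul h16 (mul_le_mul_of_nonneg_left hee hB0) (by positivity)
              (by norm_num)
        _ = (16*c₅) * (((j:ℝ)+1) * Real.exp (-(cc * (j:ℝ) ^ ((1:ℝ)/4)))) := by ring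
    calc ((Finset.Icc (-(2:ℤ)^(j+1)) ((2:ℤ)^(j+1))).card : ℝ≥0∞) *
        (((Finset.Icc (-(2 * W j)) (2 * W j)).card : ℝ≥0∞) *
          ((∑' k : ℕ, psiFun ν (u j * Real.exp (lam * ((k:ℝ)+1)))) * ExtM j))
        ≤ ENNReal.ofReal ((2:ℝ)^(j+2)+1) * (ENNReal.ofReal (c₅ * ((j:ℝ)+1)) *
          (((CA * CB * S₀) * ENNReal.ofReal (Real.exp (5*α/4 * qseq (2^(j+1))) * (2/(2:ℝ)^j))) *
            ((CG + CH) * ENNReal.ofReal (Real.exp (-(2*α) * Q j))))) :=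
          mul_le_mul' hcardx (mul_le_mul' hcy (mul_le_mul' hsum hext))
      _ = Dfull * (ENNReal.ofReal ((2:ℝ)^(j+2)+1) * ENNReal.ofReal (c₅ * ((j:ℝ)+1)) *
          ENNReal.ofReal (Real.exp (5*α/4 * qseq (2^(j+1))) * (2/(2:ℝ)^j)) *
          ENNReal.ofReal (Real.exp (-(2*α) * Q j))) := by
          rw [hDdef]
          ring
      _ = Dfull * ENNReal.ofReal (((2:ℝ)^(j+2)+1) * (c₅*((j:ℝ)+1)) *
          (Real.exp (5*α/4 * qseq (2^(j+1))) * (2/(2:ℝ)^j)) * Real.exp (-(2*α) * Q j)) := by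
          rw [← ENNReal.ofReal_mul hA0, ← ENNReal.ofReal_mul (mul_nonneg hA0 hB0),
            ← ENNReal.ofReal_mul (mul_nonneg (mul_nonneg hA0 hB0) hq5)]
      _ ≤ Dfull * ENNReal.ofReal ((16*c₅) *
          (((j:ℝ)+1) * Real.exp (-(cc * (j:ℝ) ^ ((1:ℝ)/4))))) :=
          mul_le_mul_right (ENNReal.ofReal_le_ofReal hreal) _
  have hsummable : ∑' j : ℕ, P (H j) ≠ ⊤ := by
    rw [eventually_atTop] at hblockev hEventG
    obtain ⟨J₁, hJ₁⟩ := hblockev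
    obtain ⟨J₂, hJ₂⟩ := hEventG
    set J : ℕ := max (max J₁ J₂) 1 with hJdef
    have hb : ∀ j : ℕ, P (H j) ≤ (if j < J then 1 else 0) +
        Dfull * ENNReal.ofReal ((16*c₅) *
          (((j:ℝ)+1) * Real.exp (-(cc * (j:ℝ) ^ ((1:ℝ)/4))))) := by
      intro j
      by_cases hj : j < J
      · rw [if_pos hj]
        exact le_add_right prob_le_one
      · rw [if_neg hj, zero_add]
        push_neg at hj
        have hj1 : 1 ≤ j := le_trans (le_max_right _ _) hj
        have hjJ₁ : J₁ ≤ j := le_trans (le_trans (le_max_left _ _) (le_max_left _ _)) hj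
        have hjJ₂ : J₂ ≤ j := le_trans (le_trans (le_max_right _ _) (le_max_left _ _)) hj
        exact hgood j hj1 (hJ₁ j hjJ₁) (hJ₂ j hjJ₂).1 (hJ₂ j hjJ₂).2
    refine ne_top_of_le_ne_top ?_ (ENNReal.tsum_le_tsum hb)
    rw [ENNReal.tsum_add]
    apply ENNReal.add_ne_top.mpr
    constructor
    · have h1 : (∑' j : ℕ, if j < J then (1:ℝ≥0∞) else 0) =
          ∑ j ∈ Finset.range J, (if j < J then (1:ℝ≥0∞) else 0) := by
        apply tsum_eq_sum
        intro b hb'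
        rw [if_neg]
        simpa [Finset.mem_range] using hb'
      rw [h1]
      apply (ENNReal.sum_lt_top.mpr ?_).ne
      intro a _
      split <;> simp
    · rw [ENNReal.tsum_mul_left]
      apply ENNReal.mul_ne_top hDtop
      have hsum := (summable_quarter hccpos).mul_left (16*c₅)
      have hnn : ∀ j:ℕ, 0 ≤ (16*c₅) *
          (((j:ℝ)+1) * Real.exp (-(cc * (j:ℝ) ^ ((1:ℝ)/4)))) := fun j => by positivity
      rw [← ENNReal.ofReal_tsum_of_nonneg hnn hsum]
      exact ENNReal.ofReal_ne_top
  -- Borel-Cantelli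
  have hBC : ∀ᵐ ω ∂P, ∀ᶠ j in atTop, ω ∉ H j := MeasureTheory.ae_eventually_notMem hsummable
  -- pathwise inclusion
  have hincl : ∀ (n : ℕ), 2 ≤ n → ∀ ω : Ω,
      (∃ x : ℤ, -(n : ℤ) ≤ x ∧ x ≤ (n : ℤ) ∧ ∃ k : ℕ,
        d n * Real.exp (-qseq n) < rhoK lam c x k ω ∧
        ∃ y : ℤ, x - 2 * (⌈C * Real.log n⌉₊ : ℤ) ≤ y ∧ y ≤ x + 2 * (⌈C * Real.log n⌉₊ : ℤ) ∧
          y ≠ x - 1 ∧ y ≠ x + (k : ℤ) ∧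
          (c y ω < Real.exp (-4 * qseq n) ∨ Real.exp (4 * qseq n) < c y ω)) →
      ω ∈ H (Nat.log 2 n) := by
    intro n hn2 ω hprop
    obtain ⟨x, hx1, hx2, k, hrk, y, hy1, hy2, hyne1, hyne2, hext⟩ := hprop
    set j := Nat.log 2 n with hjdef
    have h2j : 2^j ≤ n := Nat.pow_log_le_self 2 (by omega)
    have hn2j : n < 2^(j+1) := Nat.lt_pow_succ_log_self (by norm_num) n
    have hcastZ : ((n:ℤ)) ≤ (2:ℤ)^(j+1) := by
      have : (n:ℤ) < ((2^(j+1) : ℕ) : ℤ) := by exact_mod_cast hn2j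
      calc (n:ℤ) ≤ ((2^(j+1):ℕ):ℤ) := this.le
        _ = (2:ℤ)^(j+1) := by push_cast; ring
    have hxmem : x ∈ Finset.Icc (-(2:ℤ)^(j+1)) ((2:ℤ)^(j+1)) := by
      rw [Finset.mem_Icc]
      constructor
      · calc -(2:ℤ)^(j+1) ≤ -(n:ℤ) := by omega
          _ ≤ x := hx1
      · exact le_trans hx2 hcastZ
    have hW : ((⌈C * Real.log (n:ℝ)⌉₊ : ℕ) : ℤ) ≤ W j := by
      simp only [hWdef]
      have hceil : ⌈C * Real.log (n:ℝ)⌉₊ ≤ ⌈C * Real.log ((2^(j+1):ℕ):ℝ)⌉₊ := by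
        apply Nat.ceil_le_ceil
        apply mul_le_mul_of_nonneg_left _ hC.le
        apply Real.log_le_log (by exact_mod_cast Nat.lt_of_lt_of_le Nat.zero_lt_two hn2)
        exact_mod_cast hn2j.le
      exact_mod_cast hceil
    have hymem : y ∈ Finset.Icc (x - 2 * W j) (x + 2 * W j) := by
      rw [Finset.mem_Icc]
      omega
    have hnIco : n ∈ Finset.Ico (2^j) (2^(j+1)) := Finset.mem_Ico.mpr ⟨h2j, hn2j⟩
    have hcore : ω ∈ ({ω | u j < rhoK lam c x k ω} ∩ (c y) ⁻¹' (Ext j) ∩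
        {ω | y ≠ x - 1 ∧ y ≠ x + (k:ℤ)}) := by
      refine ⟨⟨?_, ?_⟩, ⟨hyne1, hyne2⟩⟩
      · exact lt_of_le_of_lt (hule j n hnIco) hrk
      · have hqn : Q j ≤ qseq n := hqmono (2^j) n Nat.one_le_two_pow h2j
        rw [Set.mem_preimage]
        simp only [hExtdef, Set.mem_union, Set.mem_Iio, Set.mem_Ioi]
        rcases hext with hlo | hhi
        · left
          calc c y ω < Real.exp (-4 * qseq n) := hlo
            _ ≤ Real.exp (-4 * Q j) := Real.exp_le_exp.mpr (by linarith)
        · right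
          calc Real.exp (4 * Q j) ≤ Real.exp (4 * qseq n) :=
              Real.exp_le_exp.mpr (by linarith)
            _ < c y ω := hhi
    simp only [hHdef]
    exact Set.mem_iUnion₂.mpr ⟨x, hxmem, Set.mem_iUnion.mpr ⟨k,
      Set.mem_iUnion₂.mpr ⟨y, hymem, hcore⟩⟩⟩
  -- conclude
  filter_upwards [hBC] with ω hω
  rw [eventually_atTop] at hω
  obtain ⟨J, hJ⟩ := hω
  apply Set.Finite.subset (Set.finite_Iio (2^(J+1)))
  rintro n ⟨hn2, hnprop⟩
  have hmem := hincl n hn2 ω hnprop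
  have hlt : Nat.log 2 n < J := by
    by_contra hge
    push_neg at hge
    exact hJ _ hge hmem
  have h1 : n < 2^(Nat.log 2 n + 1) := Nat.lt_pow_succ_log_self (by norm_num) n
  have h2 : 2^(Nat.log 2 n + 1) ≤ 2^(J+1) := Nat.pow_le_pow_right (by norm_num) (by omega)
  exact Set.mem_Iio.mpr (lt_of_lt_of_le h1 h2)
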